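/- arXiv:2010.09083 — 10 statements merged into one kernel-verified Lean document; each statement's English description precedes it below -/
import Mathlib

section
/- For all real numbers z with 0 ≤ z ≤ 1, we have (1-z)^(1-z) · (1+z)^(1+z) · e^(-z²) ≥ 1, with the convention 0^0 = 1. -/
/-!
Taking logarithms, the claim is `z ^ 2 ≤ φ z` for `φ z = (1 + z) log (1 + z) + (1 - z) log (1 - z)`.
Both sides vanish at `0`, and `φ' z = log (1 + z) - log (1 - z)` dominates `2 z`, the leading
term of its power series `2 ∑ z ^ (2k+1) / (2k+1)`, whose terms are all nonnegative for `z ≥ 0`.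
-/

open Set

namespace Real

lemma two_mul_le_log_one_add_sub_log_one_sub {x : ℝ} (hx₀ : 0 ≤ x) (hx₁ : x < 1) :
    2 * x ≤ log (1 + x) - log (1 - x) := by
  have hsum := hasSum_log_sub_log_of_abs_lt_one (abs_lt.2 ⟨by linarith, hx₁⟩)
  simpa using sum_le_hasSum (Finset.range 1) (fun k _ => by positivity) hsum

lemma self_rpow_self {x : ℝ} (hx : 0 ≤ x) : x ^ x = exp (x * log x) := by
  rcases hx.eq_or_lt with rfl | hx
  · simp
  · rw [rpow_def_of_pos hx, mul_comm]

lemma hasDerivAt_one_add_mul_log_add_one_sub_mul_log {x : ℝ} (hx₀ : -1 < x) (hx₁ : x < 1) :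
    HasDerivAt (fun y => (1 + y) * log (1 + y) + (1 - y) * log (1 - y))
      (log (1 + x) - log (1 - x)) x := by
  have hp := (hasDerivAt_mul_log (x := 1 + x) (by linarith)).comp x
    ((hasDerivAt_id x).const_add 1)
  have hm := (hasDerivAt_mul_log (x := 1 - x) (by linarith)).comp x
    ((hasDerivAt_id x).const_sub 1)
  exact (hp.add hm).congr_deriv (by ring)

lemma sq_le_one_add_mul_log_add_one_sub_mul_log {z : ℝ} (hz₀ : 0 ≤ z) (hz₁ : z ≤ 1) :
    z ^ 2 ≤ (1 + z) * log (1 + z) + (1 - z) * log (1 - z) := by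
  set φ : ℝ → ℝ := fun y => (1 + y) * log (1 + y) + (1 - y) * log (1 - y) - y ^ 2
  have hmono : MonotoneOn φ (Icc 0 1) := by
    refine monotoneOn_of_hasDerivWithinAt_nonneg (convex_Icc 0 1)
      (f' := fun x => log (1 + x) - log (1 - x) - 2 * x) ?_ (fun x hx => ?_) (fun x hx => ?_)
    · exact Continuous.continuousOn (by fun_prop)
    · rw [interior_Icc] at hx
      exact ((hasDerivAt_one_add_mul_log_add_one_sub_mul_log (by linarith [hx.1]) hx.2).sub
        (by simpa using hasDerivAt_pow 2 x)).hasDerivWithinAt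
    · rw [interior_Icc] at hx
      linarith [two_mul_le_log_one_add_sub_log_one_sub hx.1.le hx.2]
  have := hmono ⟨le_rfl, zero_le_one⟩ ⟨hz₀, hz₁⟩ hz₀
  norm_num [φ] at this
  linarith

end Real

/-- For all real `z` with `0 ≤ z ≤ 1`,
`(1-z)^(1-z) * (1+z)^(1+z) * exp(-z^2) ≥ 1` (real powers, with `0^0 = 1`). -/
theorem stmt0 (z : ℝ) (h0 : 0 ≤ z) (h1 : z ≤ 1) :
    1 ≤ (1 - z) ^ (1 - z) * (1 + z) ^ (1 + z) * Real.exp (-z ^ 2) := by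
  rw [Real.self_rpow_self (by linarith), Real.self_rpow_self (by linarith), ← Real.exp_add,
    ← Real.exp_add]
  apply Real.one_le_exp
  linarith [Real.sq_le_one_add_mul_log_add_one_sub_mul_log h0 h1]
end

section
/- Let V_1, V_2, ... be i.i.d. random variables taking values -1 and 1 with probability 1/2 each, let S_n = V_1 + ... + V_n (S_0 = 0), and let R_n = (1 + S_{n-1} + S_n)/2 be the edge traversed at step n. Define M_n^+ = max{R_1, ..., R_n}. Then for every integer n ≥ 1 and every integer m ≥ 0, P[M_n^+ = m] = 2^(-n) · C(n, ⌊(n-m)/2⌋), where C(n,k) denotes the binomial coefficient with the convention C(n,k) = 0 if k < 0 or k > n. -/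
/-!
Since every step is `±1`, the edge crossed at step `k` is `R_k = max S_{k-1} S_k`, so
`M_n^+` is the running maximum `max_{0 ≤ k ≤ n} S_k`. By independence each of the `2^n` sign
sequences has probability `2^(-n)`, so it suffices to count sequences by their running maximum.
Splitting off the first step, the running maximum of `x :: l` is `max 0 (x + max(l))`; hence the
number `c(n, m)` of sequences with maximum `m` satisfies `c(n+1, m+1) = c(n, m) + c(n, m+2)` and
`c(n+1, 0) = c(n, 0) + c(n, 1)`, a Pascal-type recursion solved by `C(n, ⌈(n+m)/2⌉)`, which
equals `C(n, ⌊(n-m)/2⌋)` by symmetry of the binomial coefficients.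
-/

open MeasureTheory ProbabilityTheory Finset

namespace SimpleRandomWalk

def boolSign (b : Bool) : ℤ := if b then 1 else -1

@[simp] lemma boolSign_true : boolSign true = 1 := rfl

@[simp] lemma boolSign_false : boolSign false = -1 := rfl

lemma boolSign_eq_iff_decide_eq {x : ℤ} (hx : x = 1 ∨ x = -1) (b : Bool) :
    x = boolSign b ↔ decide (x = 1) = b := by
  rcases hx with rfl | rfl <;> cases b <;> simp [boolSign]

def maxPrefixSum : List ℤ → ℤ
  | [] => 0
  | x :: l => max 0 (x + maxPrefixSum l)

lemma maxPrefixSum_nonneg (l : List ℤ) : 0 ≤ maxPrefixSum l := by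
  cases l <;> simp [maxPrefixSum]

lemma maxPrefixSum_concat (l : List ℤ) (x : ℤ) :
    maxPrefixSum (l.concat x) = max (maxPrefixSum l) (l.sum + x) := by
  induction l with
  | nil => simp [maxPrefixSum]
  | cons y l ih =>
    simp only [List.concat_cons, maxPrefixSum, ih, List.sum_cons]
    rw [← max_add_add_left, max_assoc, add_assoc]

lemma isGreatest_maxPrefixSum_ofFn (v : ℕ → ℤ) (n : ℕ) :
    IsGreatest ((fun k ↦ ∑ i ∈ Icc 1 k, v i) '' Set.Iic n)
      (maxPrefixSum (List.ofFn fun i : Fin n ↦ v (i + 1))) := by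
  induction n with
  | zero =>
    rw [show Set.Iic 0 = {0} from Set.Iic_bot, Set.image_singleton]
    simp [maxPrefixSum]
  | succ n ih =>
    have hsum : (List.ofFn fun i : Fin n ↦ v (i + 1)).sum = ∑ i ∈ Icc 1 n, v i := by
      rw [List.sum_ofFn, Fin.sum_univ_eq_sum_range (fun i ↦ v (i + 1)), Finset.range_eq_Ico,
        Finset.sum_Ico_add', Finset.Ico_add_one_right_eq_Icc]
    rw [List.ofFn_succ', maxPrefixSum_concat, max_comm]
    simp only [Fin.val_castSucc, Fin.val_last, hsum,
      ← Finset.sum_Icc_succ_top (Nat.le_add_left 1 n)]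
    rw [← Order.succ_eq_add_one, Order.Iic_succ, Set.image_insert_eq]
    exact ih.insert _

lemma isGreatest_image_Icc_max_pred {α : Type*} [LinearOrder α] (s : ℕ → α) {n : ℕ}
    (hn : 1 ≤ n) {y : α} (h : IsGreatest (s '' Set.Iic n) y) :
    IsGreatest ((fun k ↦ max (s (k - 1)) (s k)) '' Set.Icc 1 n) y := by
  obtain ⟨⟨j, hj, rfl⟩, hub⟩ := h
  refine ⟨?_, ?_⟩
  · rcases j with _ | j
    · exact ⟨1, ⟨le_rfl, hn⟩, max_eq_left (hub ⟨1, hn, rfl⟩)⟩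
    · exact ⟨j + 1, ⟨by omega, hj⟩,
        max_eq_right (hub ⟨j, (Nat.le_succ j).trans hj, rfl⟩)⟩
  · rintro _ ⟨k, ⟨-, hkn⟩, rfl⟩
    exact max_le (hub ⟨k - 1, (Nat.sub_le k 1).trans hkn, rfl⟩) (hub ⟨k, hkn, rfl⟩)

lemma add_add_div_two_eq_max {a x : ℤ} (hx : x = 1 ∨ x = -1) :
    (1 + a + (a + x)) / 2 = max a (a + x) := by
  rcases hx with rfl | rfl <;> omega

lemma maxPrefixSum_ofFn_cons {n : ℕ} (x : Bool) (b : Fin n → Bool) :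
    maxPrefixSum (List.ofFn (boolSign ∘ Fin.cons x b)) =
      max 0 (boolSign x + maxPrefixSum (List.ofFn (boolSign ∘ b))) := by
  simp only [List.ofFn_succ, Function.comp_apply, Fin.cons_zero, Fin.cons_succ, maxPrefixSum]
  rfl

lemma card_filter_fin_succ_bool {n : ℕ} (p : (Fin (n + 1) → Bool) → Prop) [DecidablePred p] :
    #{b | p b} = #{b : Fin n → Bool | p (Fin.cons true b)} +
      #{b : Fin n → Bool | p (Fin.cons false b)} := by
  rw [card_filter, ← Equiv.sum_comp (Fin.consEquiv _), Fintype.sum_prod_type, Fintype.sum_bool,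
    card_filter, card_filter]
  rfl

def numPathsWithMax (n m : ℕ) : ℕ :=
  #{b : Fin n → Bool | maxPrefixSum (List.ofFn (boolSign ∘ b)) = m}

lemma numPathsWithMax_zero (m : ℕ) : numPathsWithMax 0 m = if m = 0 then 1 else 0 := by
  cases m <;>
    simp [numPathsWithMax, maxPrefixSum, eq_comm (a := (0 : ℤ)), Nat.cast_add_one_ne_zero]

lemma numPathsWithMax_succ_zero (n : ℕ) :
    numPathsWithMax (n + 1) 0 = numPathsWithMax n 0 + numPathsWithMax n 1 := by
  have hdisj : Disjoint (α := Finset (Fin n → Bool))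
      {b | maxPrefixSum (List.ofFn (boolSign ∘ b)) = 0}
      {b | maxPrefixSum (List.ofFn (boolSign ∘ b)) = 1} :=
    disjoint_filter.2 fun b _ h0 h1 ↦ by omega
  simp only [numPathsWithMax, Nat.cast_zero, Nat.cast_one]
  rw [card_filter_fin_succ_bool, ← card_union_of_disjoint hdisj, ← filter_or]
  simp only [maxPrefixSum_ofFn_cons, boolSign_true, boolSign_false]
  rw [filter_false_of_mem fun b _ ↦ ?_, card_empty, zero_add]
  · congr 1
    refine filter_congr fun b _ ↦ ?_
    have := maxPrefixSum_nonneg (List.ofFn (boolSign ∘ b))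
    omega
  · have := maxPrefixSum_nonneg (List.ofFn (boolSign ∘ b))
    omega

lemma numPathsWithMax_succ_add_one (n m : ℕ) :
    numPathsWithMax (n + 1) (m + 1) = numPathsWithMax n m + numPathsWithMax n (m + 2) := by
  rw [numPathsWithMax, card_filter_fin_succ_bool, numPathsWithMax, numPathsWithMax]
  simp only [maxPrefixSum_ofFn_cons, boolSign_true, boolSign_false]
  congr 2 <;> refine filter_congr fun b _ ↦ ?_ <;>
    have := maxPrefixSum_nonneg (List.ofFn (boolSign ∘ b)) <;> omega

theorem numPathsWithMax_eq_choose (n m : ℕ) :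
    numPathsWithMax n m = n.choose ((n + m + 1) / 2) := by
  induction n generalizing m with
  | zero =>
    rcases m with _ | m
    · simp [numPathsWithMax_zero]
    · rw [numPathsWithMax_zero, if_neg m.succ_ne_zero, Nat.choose_eq_zero_of_lt (by omega)]
  | succ n ih =>
    rcases m with _ | m
    · rw [numPathsWithMax_succ_zero, ih, ih, show (n + 1 + 0 + 1) / 2 = n / 2 + 1 by omega,
        Nat.choose_succ_succ', ← Nat.choose_symm (Nat.div_le_self n 2),
        show n - n / 2 = (n + 0 + 1) / 2 by omega]
    · rw [numPathsWithMax_succ_add_one, ih, ih,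
        show (n + 1 + (m + 1) + 1) / 2 = (n + m + 1) / 2 + 1 by omega,
        Nat.choose_succ_succ', show (n + (m + 2) + 1) / 2 = (n + m + 1) / 2 + 1 by omega]

lemma ite_lt_choose_sub_div_two (n m : ℕ) :
    (if n < m then 0 else n.choose ((n - m) / 2)) = n.choose ((n + m + 1) / 2) := by
  split_ifs with h
  · exact (Nat.choose_eq_zero_of_lt (by omega)).symm
  · rw [← Nat.choose_symm (by omega : (n - m) / 2 ≤ n)]
    congr 1
    omega

section FairSigns

variable {Ω : Type*} [MeasurableSpace Ω] {P : Measure Ω} [IsProbabilityMeasure P]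

lemma measure_preimage_boolSign {Y : Ω → ℤ} (hY : Measurable Y)
    (hYval : ∀ ω, Y ω = 1 ∨ Y ω = -1) (hYfair : P {ω | Y ω = 1} = 1 / 2) (b : Bool) :
    P (Y ⁻¹' {boolSign b}) = 2⁻¹ := by
  have hone : MeasurableSet {ω | Y ω = 1} := hY (measurableSet_singleton 1)
  cases b
  · have hcompl : Y ⁻¹' {boolSign false} = {ω | Y ω = 1}ᶜ := by
      ext ω
      rcases hYval ω with h | h <;> simp [h]
    rw [hcompl, prob_compl_eq_one_sub hone, hYfair, one_div, ENNReal.one_sub_inv_two]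
  · rw [boolSign_true, ← one_div]
    exact hYfair

variable {n : ℕ} {X : Fin n → Ω → ℤ}

lemma measure_iInter_preimage_boolSign (hX : iIndepFun X P) (hXmeas : ∀ i, Measurable (X i))
    (hXval : ∀ i ω, X i ω = 1 ∨ X i ω = -1) (hXfair : ∀ i, P {ω | X i ω = 1} = 1 / 2)
    (b : Fin n → Bool) : P (⋂ i, X i ⁻¹' {boolSign (b i)}) = 2⁻¹ ^ n := by
  rw [hX.meas_iInter fun i ↦ ⟨{boolSign (b i)}, measurableSet_singleton _, rfl⟩]
  simp [measure_preimage_boolSign (hXmeas _) (hXval _) (hXfair _)]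

theorem measure_setOf_eq_card_div (hX : iIndepFun X P) (hXmeas : ∀ i, Measurable (X i))
    (hXval : ∀ i ω, X i ω = 1 ∨ X i ω = -1) (hXfair : ∀ i, P {ω | X i ω = 1} = 1 / 2)
    (Q : (Fin n → ℤ) → Prop) [DecidablePred Q] :
    P {ω | Q fun i ↦ X i ω} = #{b : Fin n → Bool | Q (boolSign ∘ b)} / 2 ^ n := by
  set B : Ω → Fin n → Bool := fun ω i ↦ decide (X i ω = 1)
  have hfiber (b : Fin n → Bool) : B ⁻¹' {b} = ⋂ i, X i ⁻¹' {boolSign (b i)} := by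
    ext ω
    simp [B, funext_iff, boolSign_eq_iff_decide_eq (hXval _ ω)]
  have hX_eq (ω : Ω) : (fun i ↦ X i ω) = boolSign ∘ B ω :=
    funext fun i ↦ (boolSign_eq_iff_decide_eq (hXval i ω) _).2 rfl
  have hevent : {ω | Q fun i ↦ X i ω} =
      B ⁻¹' ↑({b | Q (boolSign ∘ b)} : Finset (Fin n → Bool)) := by
    ext ω
    simp only [Set.mem_ofPred_eq, Set.mem_preimage, coe_filter, mem_univ, true_and, hX_eq]
  rw [hevent, ← sum_measure_preimage_singleton _ fun b _ ↦ ?_]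
  · rw [sum_congr rfl fun b _ ↦
        by rw [hfiber, measure_iInter_preimage_boolSign hX hXmeas hXval hXfair],
      sum_const, nsmul_eq_mul, ← ENNReal.inv_pow, div_eq_mul_inv]
  · rw [hfiber]
    exact MeasurableSet.iInter fun i ↦ hXmeas i (measurableSet_singleton _)

end FairSigns

end SimpleRandomWalk

open SimpleRandomWalk

/-- Distribution of the rightmost visited edge `M_n^+` of the simple symmetric
random walk: `P[M_n^+ = m] = 2^(-n) · C(n, ⌊(n-m)/2⌋)` (with the convention that
the binomial coefficient vanishes outside `0 ≤ k ≤ n`). -/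
theorem stmt1
    {Ω : Type*} [MeasurableSpace Ω] (P : Measure Ω) [IsProbabilityMeasure P]
    (V : ℕ → Ω → ℤ)
    (hVmeas : ∀ n, Measurable (V n))
    (hVval : ∀ n ω, V n ω = 1 ∨ V n ω = -1)
    (hVfair : ∀ n, P {ω | V n ω = 1} = 1 / 2)
    (hVindep : iIndepFun V P)
    (S : ℕ → Ω → ℤ) (hS : ∀ n ω, S n ω = ∑ k ∈ Finset.Icc 1 n, V k ω)
    (R : ℕ → Ω → ℤ) (hR : ∀ n ω, R n ω = (1 + S (n - 1) ω + S n ω) / 2)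
    (M : ℕ → Ω → ℤ)
    (hM : ∀ n ω, 1 ≤ n → IsGreatest ((fun k ↦ R k ω) '' Set.Icc 1 n) (M n ω)) :
    ∀ n : ℕ, 1 ≤ n → ∀ m : ℕ,
      P {ω | M n ω = (m : ℤ)} =
        (if n < m then 0 else (n.choose ((n - m) / 2) : ENNReal)) / 2 ^ n := by
  intro n hn m
  have hR_eq (ω : Ω) : ∀ k ∈ Set.Icc 1 n, R k ω = max (S (k - 1) ω) (S k ω) := by
    rintro _ ⟨hk, -⟩
    obtain ⟨j, rfl⟩ := Nat.exists_eq_add_of_le' hk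
    rw [hR, hS (j + 1), sum_Icc_succ_top (by omega), ← hS, Nat.add_sub_cancel]
    exact add_add_div_two_eq_max (hVval _ ω)
  have hM_eq (ω : Ω) : M n ω = maxPrefixSum (List.ofFn fun i : Fin n ↦ V (i + 1) ω) := by
    refine (hM n ω hn).unique ?_
    rw [Set.image_congr (hR_eq ω)]
    refine isGreatest_image_Icc_max_pred (S · ω) hn ?_
    simpa only [hS] using isGreatest_maxPrefixSum_ofFn (V · ω) n
  have hindep : iIndepFun (fun i : Fin n ↦ V (i + 1)) P :=
    hVindep.precomp fun i j h ↦ Fin.ext (by simpa using h)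
  simp only [hM_eq]
  rw [measure_setOf_eq_card_div hindep (fun _ ↦ hVmeas _) (fun _ ↦ hVval _) (fun _ ↦ hVfair _)
    (fun x ↦ maxPrefixSum (List.ofFn x) = m), ← numPathsWithMax, numPathsWithMax_eq_choose, ← ite_lt_choose_sub_div_two, Nat.cast_ite,
    Nat.cast_zero]
end

section
/- For the simple symmetric random walk, let U_{n,r} = Σ_{k=1}^n 1{R_k = r} denote the local time on edge r up to time n, where R_k = (1+S_{k-1}+S_k)/2. Then for every n ≥ 1, r ≥ 1, and integer u ≥ 1, P[U_{n,r} = u] = 2^(-n) · C(n, ⌊(n+r+u)/2⌋), and P[U_{n,r} = 0] = 2^(-n) · Σ_{k=1}^r C(n, ⌊(n+2k-r)/2⌋). -/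
/-!
Only the signs of the first `n` steps matter, and by independence and fairness each of the
`2 ^ n` sign patterns has probability `2 ^ (-n)`; so the claim is that the binomial expressions
count the `±1` paths of length `n` that cross edge `r` exactly `u` times. Splitting paths by their
first step and measuring the edge from the new position gives a recursion in `n`; reflecting the
path exchanges the edges `r` and `1 - r`, so it closes up on the edges `r ≥ 1`. By Pascal's rule
the binomial expressions satisfy the same recursion (for `u = 0` the two sums telescope), and both
sides agree for `n = 0`.
-/

open MeasureTheory ProbabilityTheory

/-- Binomial coefficient `C(n,k)` for an integer `k`, with the convention that it
vanishes for `k < 0` (and, via `Nat.choose`, for `k > n`). -/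
def choZ (n : ℕ) (k : ℤ) : ℕ := if k < 0 then 0 else n.choose k.toNat

open Finset

theorem Finset.sum_Icc_one_eq_sum_range {M : Type*} [AddCommMonoid M] (f : ℕ → M) (n : ℕ) :
    ∑ k ∈ Icc 1 n, f k = ∑ k ∈ range n, f (k + 1) := by
  rw [range_eq_Ico, sum_Ico_add' f 0 n 1, zero_add, Ico_add_one_right_eq_Icc]

theorem Finset.sum_Icc_add_one_right {α M : Type*} [LinearOrder α] [One α]
    [LocallyFiniteOrder α] [Add α] [SuccAddOrder α] [NoMaxOrder α] [AddCommMonoid M] {a b : α}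
    (h : a ≤ b + 1) (f : α → M) : ∑ k ∈ Icc a (b + 1), f k = ∑ k ∈ Icc a b, f k + f (b + 1) := by
  rw [← insert_Icc_right_eq_Icc_add_one h, sum_insert (by simp), add_comm]

theorem card_filter_fin_cons {α : Type*} [Fintype α] {n : ℕ}
    (p : (Fin (n + 1) → α) → Prop) [DecidablePred p] :
    #{ε | p ε} = ∑ a, #{ε : Fin n → α | p (Fin.cons a ε)} := by
  simp only [card_filter]
  rw [← (Fin.consEquiv fun _ => α).sum_comp, Fintype.sum_prod_type]
  rfl

theorem choZ_succ (n : ℕ) (k : ℤ) : choZ (n + 1) k = choZ n (k - 1) + choZ n k := by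
  unfold choZ
  rcases lt_trichotomy k 0 with hk | rfl | hk
  · simp [hk, show k - 1 < 0 by omega]
  · simp
  · rw [if_neg (by omega), if_neg (by omega), if_neg (by omega),
      show k.toNat = (k - 1).toNat + 1 by omega, Nat.choose_succ_succ]

theorem choZ_zero_left (k : ℤ) : choZ 0 k = if k = 0 then 1 else 0 := by
  unfold choZ
  split_ifs <;> simp_all [Nat.choose_eq_zero_iff]
  omega

theorem one_add_add_div_two_eq_max {s v : ℤ} (hv : v = 1 ∨ v = -1) :
    (1 + s + (s + v)) / 2 = max s (s + v) := by
  omega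

def signStep (b : Bool) : ℤ := if b then 1 else -1

theorem signStep_decide_eq_one {x : ℤ} (hx : x = 1 ∨ x = -1) : signStep (decide (x = 1)) = x := by
  rcases hx with rfl | rfl <;> rfl

/-- `edgeVisits r L` counts the steps of the walk from `0` with increments `L` that lie on edge `r`,
a step from `s` to `s + x` lying on edge `max s (s + x)` (the paper's `R_k` when `x = ±1`). The
edge is re-indexed relative to the current position, which makes the first-step recursion
definitional. -/
def edgeVisits : ℤ → List ℤ → ℕ
  | _, [] => 0
  | r, x :: L => (if max 0 x = r then 1 else 0) + edgeVisits (r - x) L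

theorem edgeVisits_ofFn (v : ℕ → ℤ) (n : ℕ) (r : ℤ) :
    edgeVisits r (List.ofFn fun i : Fin n => v i) =
      ∑ k ∈ range n,
        if max (∑ j ∈ range k, v j) (∑ j ∈ range (k + 1), v j) = r then 1 else 0 := by
  induction n generalizing v r with
  | zero => rfl
  | succ n ih =>
    rw [List.ofFn_succ, sum_range_succ']
    simp only [Fin.val_zero, Fin.val_succ, edgeVisits, ih (fun j => v (j + 1)),
      sum_range_succ' v, max_add_add_right, sum_range_zero, zero_add]
    rw [add_comm]
    congr 1
    refine sum_congr rfl fun k _ => ?_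
    simp only [eq_sub_iff_add_eq]

theorem edgeVisits_ofFn_eq_sum_Icc {v : ℕ → ℤ} (hv : ∀ k, v k = 1 ∨ v k = -1) (n : ℕ) (r : ℤ) :
    edgeVisits r (List.ofFn fun i : Fin n => v (i + 1)) =
      ∑ k ∈ Icc 1 n,
        if (1 + ∑ j ∈ Icc 1 (k - 1), v j + ∑ j ∈ Icc 1 k, v j) / 2 = r then 1 else 0 := by
  rw [edgeVisits_ofFn (fun j => v (j + 1)), sum_Icc_one_eq_sum_range]
  refine sum_congr rfl fun k _ => ?_
  rw [Nat.add_sub_cancel, sum_Icc_one_eq_sum_range, sum_Icc_one_eq_sum_range, sum_range_succ,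
    one_add_add_div_two_eq_max (hv _)]

theorem edgeVisits_signStep_true (r : ℤ) (L : List ℤ) :
    edgeVisits r (signStep true :: L) = (if r = 1 then 1 else 0) + edgeVisits (r - 1) L := by
  simp [edgeVisits, signStep, eq_comm]

theorem edgeVisits_signStep_false (r : ℤ) (L : List ℤ) :
    edgeVisits r (signStep false :: L) = (if r = 0 then 1 else 0) + edgeVisits (r + 1) L := by
  simp [edgeVisits, signStep, eq_comm]

theorem edgeVisits_one_sub_ofFn_not {n : ℕ} (ε : Fin n → Bool) (r : ℤ) :
    edgeVisits (1 - r) (List.ofFn fun i => signStep !ε i) =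
      edgeVisits r (List.ofFn fun i => signStep (ε i)) := by
  induction n generalizing r with
  | zero => rfl
  | succ n ih =>
    rw [List.ofFn_succ, List.ofFn_succ]
    cases ε 0
    · simp only [Bool.not_false, edgeVisits_signStep_true, edgeVisits_signStep_false,
        ← ih (fun i => ε i.succ) (r + 1), show 1 - r - 1 = 1 - (r + 1) by ring]
      exact congrArg (· + _) (if_congr (by omega) rfl rfl)
    · simp only [Bool.not_true, edgeVisits_signStep_true, edgeVisits_signStep_false,
        ← ih (fun i => ε i.succ) (r - 1), show 1 - r + 1 = 1 - (r - 1) by ring]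
      exact congrArg (· + _) (if_congr (by omega) rfl rfl)

def crossingCount (n : ℕ) (r : ℤ) (u : ℕ) : ℕ :=
  #{ε : Fin n → Bool | edgeVisits r (List.ofFn fun i => signStep (ε i)) = u}

theorem crossingCount_zero (r : ℤ) (u : ℕ) : crossingCount 0 r u = if u = 0 then 1 else 0 := by
  by_cases hu : u = 0 <;> simp [crossingCount, edgeVisits, hu, eq_comm]

theorem crossingCount_succ (n : ℕ) (r : ℤ) (u : ℕ) :
    crossingCount (n + 1) r u =
      #{ε : Fin n → Bool |
        (if r = 1 then 1 else 0) + edgeVisits (r - 1) (List.ofFn fun i => signStep (ε i)) = u} +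
      #{ε : Fin n → Bool |
        (if r = 0 then 1 else 0) + edgeVisits (r + 1) (List.ofFn fun i => signStep (ε i)) = u} := by
  rw [crossingCount, card_filter_fin_cons, Fintype.sum_bool]
  simp only [List.ofFn_succ, Fin.cons_zero, Fin.cons_succ, edgeVisits_signStep_true,
    edgeVisits_signStep_false]

theorem crossingCount_succ_of_pos (n : ℕ) {r : ℤ} (hr : 1 ≤ r) (u : ℕ) :
    crossingCount (n + 1) r u =
      (if r = 1 then (if u = 0 then 0 else crossingCount n 0 (u - 1))
        else crossingCount n (r - 1) u) + crossingCount n (r + 1) u := by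
  rw [crossingCount_succ, if_neg (by omega : r ≠ 0)]
  congr 1
  split_ifs with h1 hu
  · simp [hu]
  · subst h1
    unfold crossingCount
    congr 1
    ext
    simp only [mem_filter, mem_univ, true_and, sub_self]
    omega
  · simp [crossingCount]
  · simp [crossingCount]

theorem crossingCount_one_sub (n : ℕ) (r : ℤ) (u : ℕ) :
    crossingCount n (1 - r) u = crossingCount n r u := by
  refine card_nbij' (fun ε i => !ε i) (fun ε i => !ε i) ?_ ?_ ?_ ?_ <;> intro ε hε <;>
    simp only [coe_filter, mem_univ, true_and, Set.mem_ofPred_eq, Bool.not_not] at hε ⊢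
  · simpa only [sub_sub_cancel, hε] using edgeVisits_one_sub_ofFn_not ε (1 - r)
  · rw [edgeVisits_one_sub_ofFn_not, hε]

noncomputable def crossingCountFormula (n : ℕ) (r : ℤ) (u : ℕ) : ℕ :=
  if u = 0 then ∑ k ∈ Icc 1 r, choZ n ((n + 2 * k - r) / 2) else choZ n ((n + r + u) / 2)

theorem crossingCountFormula_zero {r : ℤ} (hr : 1 ≤ r) (u : ℕ) :
    crossingCountFormula 0 r u = if u = 0 then 1 else 0 := by
  unfold crossingCountFormula
  split_ifs with hu
  · rw [sum_eq_single_of_mem ((r + 1) / 2) (by simp; omega)]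
    · simp [choZ_zero_left]; omega
    · intro k hk hne
      simp at hk
      simp [choZ_zero_left]; omega
  · simp [choZ_zero_left]; omega

theorem crossingCountFormula_one (n v : ℕ) :
    crossingCountFormula n 1 v = choZ n ((n + 1 + v) / 2) := by
  unfold crossingCountFormula
  split_ifs with hv
  · simp [hv]; congr 1; omega
  · rfl

theorem crossingCountFormula_succ_of_ne_zero (n : ℕ) (r : ℤ) {u : ℕ} (hu : u ≠ 0) :
    crossingCountFormula (n + 1) r u =
      choZ n ((n + r + u - 1) / 2) + crossingCountFormula n (r + 1) u := by
  simp only [crossingCountFormula, if_neg hu, choZ_succ]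
  congr 2 <;> push_cast <;> omega

-- For `r = 1` the first summand is the empty sum over `Icc 1 0`.
theorem crossingCountFormula_succ_zero (n : ℕ) {r : ℤ} (hr : 1 ≤ r) :
    crossingCountFormula (n + 1) r 0 =
      crossingCountFormula n (r - 1) 0 + crossingCountFormula n (r + 1) 0 := by
  simp only [crossingCountFormula, ↓reduceIte]
  have hsplit : ∑ k ∈ Icc 1 r, choZ (n + 1) (((n + 1 : ℕ) + 2 * k - r) / 2) =
      ∑ k ∈ Icc 1 r, choZ n ((n + 2 * k - (r + 1)) / 2) +
        ∑ k ∈ Icc 1 r, choZ n ((n + 2 * k - (r - 1)) / 2) := by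
    rw [← sum_add_distrib]
    refine sum_congr rfl fun k _ => ?_
    rw [choZ_succ]
    congr 2 <;> push_cast <;> omega
  have hlow : ∑ k ∈ Icc 1 r, choZ n ((n + 2 * k - (r - 1)) / 2) =
      ∑ k ∈ Icc 1 (r - 1), choZ n ((n + 2 * k - (r - 1)) / 2) + choZ n ((n + r + 1) / 2) := by
    have h := sum_Icc_add_one_right (a := 1) (b := r - 1) (by omega)
      fun k => choZ n ((n + 2 * k - (r - 1)) / 2)
    rw [sub_add_cancel] at h
    rw [h]
    congr 2; omega
  have hhigh : ∑ k ∈ Icc 1 (r + 1), choZ n ((n + 2 * k - (r + 1)) / 2) =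
      ∑ k ∈ Icc 1 r, choZ n ((n + 2 * k - (r + 1)) / 2) + choZ n ((n + r + 1) / 2) := by
    rw [sum_Icc_add_one_right (by omega)]
    congr 2; omega
  rw [hsplit, hlow, hhigh]
  ring

theorem crossingCount_eq_formula (n : ℕ) {r : ℤ} (hr : 1 ≤ r) (u : ℕ) :
    crossingCount n r u = crossingCountFormula n r u := by
  induction n generalizing r u with
  | zero => rw [crossingCount_zero, crossingCountFormula_zero hr]
  | succ n ih =>
    rw [crossingCount_succ_of_pos n hr, ih (by omega : 1 ≤ r + 1)]
    rcases eq_or_ne u 0 with rfl | hu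
    · rw [crossingCountFormula_succ_zero n hr]
      rcases eq_or_ne r 1 with rfl | h1
      · simp [crossingCountFormula]
      · rw [if_neg h1, ih (by omega)]
    · rw [crossingCountFormula_succ_of_ne_zero n r hu, if_neg hu]
      congr 1
      split_ifs with h1
      · have h0 : crossingCount n 0 (u - 1) = crossingCount n 1 (u - 1) := by
          simpa using crossingCount_one_sub n 1 (u - 1)
        rw [h0, ih le_rfl, crossingCountFormula_one, h1]
        congr 1; omega
      · rw [ih (by omega), crossingCountFormula, if_neg hu]
        congr 1; omega

theorem measure_fairCoins_mem_eq_card_div {ι Ω : Type*} [Fintype ι] [MeasurableSpace Ω]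
    (P : Measure Ω) [IsProbabilityMeasure P] (B : ι → Ω → Bool) (hB : ∀ i, Measurable (B i))
    (hfair : ∀ i, P {ω | B i ω = true} = 1 / 2) (hind : iIndepFun B P)
    (s : Finset (ι → Bool)) :
    P {ω | (fun i => B i ω) ∈ s} = #s / 2 ^ Fintype.card ι := by
  have hcoin : ∀ i b, P (B i ⁻¹' {b}) = 2⁻¹ := by
    intro i b
    cases b
    · have hcompl : B i ⁻¹' {false} = {ω | B i ω = true}ᶜ := by ext; simp
      have htrue : MeasurableSet {ω | B i ω = true} := hB i (measurableSet_singleton true)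
      rw [hcompl, prob_compl_eq_one_sub htrue, hfair, one_div, ENNReal.one_sub_inv_two]
    · exact (hfair i).trans (one_div 2)
  have hfiber : ∀ ε : ι → Bool, P ((fun ω i => B i ω) ⁻¹' {ε}) = 2⁻¹ ^ Fintype.card ι := by
    intro ε
    have hinter : (fun ω i => B i ω) ⁻¹' {ε} = ⋂ i ∈ univ, B i ⁻¹' {ε i} := by
      ext; simp [funext_iff]
    rw [hinter, hind.measure_inter_preimage_eq_mul _ fun _ _ => measurableSet_singleton _]
    simp [hcoin]
  calc P {ω | (fun i => B i ω) ∈ s}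
      = ∑ ε ∈ s, P ((fun ω i => B i ω) ⁻¹' {ε}) :=
        (sum_measure_preimage_singleton s fun ε _ =>
          measurable_pi_lambda _ hB (measurableSet_singleton ε)).symm
    _ = #s / 2 ^ Fintype.card ι := by
        rw [sum_congr rfl fun ε _ => hfiber ε, sum_const, nsmul_eq_mul, ← ENNReal.inv_pow,
          div_eq_mul_inv]

/-- Distribution of the edge local time `U_{n,r}` of the simple symmetric random
walk: for `n ≥ 1`, `r ≥ 1`, `P[U_{n,r} = u] = 2^(-n)·C(n, ⌊(n+r+u)/2⌋)` for `u ≥ 1`,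
and `P[U_{n,r} = 0] = 2^(-n)·Σ_{k=1}^r C(n, ⌊(n+2k-r)/2⌋)`. -/
theorem stmt5
    {Ω : Type*} [MeasurableSpace Ω] (P : Measure Ω) [IsProbabilityMeasure P]
    (V : ℕ → Ω → ℤ)
    (hVmeas : ∀ n, Measurable (V n))
    (hVval : ∀ n ω, V n ω = 1 ∨ V n ω = -1)
    (hVfair : ∀ n, P {ω | V n ω = 1} = 1 / 2)
    (hVindep : iIndepFun V P)
    (S : ℕ → Ω → ℤ) (hS : ∀ n ω, S n ω = ∑ k ∈ Finset.Icc 1 n, V k ω)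
    (R : ℕ → Ω → ℤ) (hR : ∀ n ω, R n ω = (1 + S (n - 1) ω + S n ω) / 2)
    (U : ℕ → ℤ → Ω → ℕ)
    (hU : ∀ n r ω, U n r ω = ∑ k ∈ Finset.Icc 1 n, if R k ω = r then 1 else 0) :
    ∀ n : ℕ, 1 ≤ n → ∀ r : ℤ, 1 ≤ r →
      (∀ u : ℕ, 1 ≤ u →
        P {ω | U n r ω = u} =
          (choZ n (Int.fdiv ((n : ℤ) + r + u) 2) : ENNReal) / 2 ^ n) ∧
      P {ω | U n r ω = 0} =
        (∑ k ∈ Finset.Icc (1 : ℤ) r,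
          (choZ n (Int.fdiv ((n : ℤ) + 2 * k - r) 2) : ENNReal)) / 2 ^ n := by
  intro n _ r hr
  let sign : Fin n → Ω → Bool := fun i ω => decide (V (i + 1) ω = 1)
  have hlocal : ∀ ω, U n r ω = edgeVisits r (List.ofFn fun i => signStep (sign i ω)) := by
    intro ω
    simp only [sign, signStep_decide_eq_one (hVval _ ω), edgeVisits_ofFn_eq_sum_Icc (hVval · ω), hU,
      hR, hS]
  have hsign_meas : ∀ i, Measurable (sign i) := fun i =>
    (measurable_from_top (f := fun x : ℤ => decide (x = 1))).comp (hVmeas _)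
  have hsign_fair : ∀ i, P {ω | sign i ω = true} = 1 / 2 := fun i => by
    simpa [sign] using hVfair (i + 1)
  have hsign_indep : iIndepFun sign P :=
    (hVindep.comp (fun _ x => decide (x = 1)) fun _ => measurable_from_top).precomp
      (g := fun i : Fin n => (i : ℕ) + 1) fun a b h => Fin.ext (by simpa using h)
  have hlaw : ∀ u, P {ω | U n r ω = u} = crossingCount n r u / 2 ^ n := fun u => by
    simpa [hlocal, crossingCount] using measure_fairCoins_mem_eq_card_div P sign hsign_meas
      hsign_fair hsign_indep {ε | edgeVisits r (List.ofFn fun i => signStep (ε i)) = u}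
  refine ⟨fun u hu => ?_, ?_⟩ <;> rw [hlaw, crossingCount_eq_formula n hr, crossingCountFormula]
  · rw [if_neg (by omega), Int.fdiv_eq_ediv_of_nonneg _ zero_le_two]
  · simp only [↓reduceIte, Nat.cast_sum, Int.fdiv_eq_ediv_of_nonneg _ zero_le_two]
end

section
/- For the simple symmetric random walk, let U_{n,r} be the local time on edge r up to time n. Then for every integer n ≥ 1 and real L > 0, P[max over r in ℤ of U_{n,r} > L] ≤ 4n·e^(-L²/(2n)). -/
/-!
Everything depends only on the first `n` signs, each sign sequence having probability `2⁻ⁿ`, so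
the claim is a count of paths. Flipping every step taken after an odd number of crossings of an
edge `r ≥ 1` straightens a path with `u` crossings into one that climbs to height `u + r - 1`; the
map is injective because whether a step is flipped depends only on the earlier steps. By the
reflection principle at most twice as many paths climb above `L` as end above `L`, and by the
Chernoff bound at most `2ⁿ exp(-L²/(2n))` paths end above `L`. Edges `r ≤ 0` reduce to `1 - r` by
negating the path, and only the `2n` edges in `[1 - n, n]` can be crossed at all.
-/

open Finset

namespace SimpleWalk

variable {n : ℕ}

def signOf (b : Bool) : ℤ := if b then 1 else -1

lemma signOf_injective : Function.Injective signOf := by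
  intro a b; cases a <;> cases b <;> simp [signOf]

def step (w : Fin n → Bool) (i : ℕ) : ℤ := if h : i < n then signOf (w ⟨i, h⟩) else 0

def walk (w : Fin n → Bool) (k : ℕ) : ℤ := ∑ i ∈ range k, step w i

lemma walk_zero (w : Fin n → Bool) : walk w 0 = 0 := rfl

lemma walk_succ (w : Fin n → Bool) (k : ℕ) : walk w (k + 1) = walk w k + step w k :=
  sum_range_succ ..

lemma step_eq_or (w : Fin n → Bool) (k : ℕ) : step w k = 1 ∨ step w k = -1 ∨ step w k = 0 := by
  unfold step signOf; split_ifs <;> simp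

lemma abs_walk_le (w : Fin n → Bool) (k : ℕ) : |walk w k| ≤ k := by
  induction k with
  | zero => simp [walk_zero]
  | succ k ih => rw [walk_succ, abs_le] at *; rcases step_eq_or w k with h | h | h <;> omega

lemma walk_eq_sum (w : Fin n → Bool) : walk w n = ∑ i, signOf (w i) := by
  rw [walk, ← Fin.sum_univ_eq_sum_range]
  simp [step]

lemma walk_congr {w w' : Fin n → Bool} {k : ℕ} (h : ∀ i : Fin n, i.val < k → w i = w' i)
    {j : ℕ} (hj : j ≤ k) : walk w j = walk w' j := by
  refine sum_congr rfl fun i hi => ?_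
  unfold step
  split_ifs with hin
  · rw [h ⟨i, hin⟩ ((mem_range.mp hi).trans_le hj)]
  · rfl

section Flip

open scoped Classical in
noncomputable def flipWhen (c : ℕ → (Fin n → Bool) → Prop) (w : Fin n → Bool) : Fin n → Bool :=
  fun i => if c i w then !w i else w i

def IsAdapted (c : ℕ → (Fin n → Bool) → Prop) : Prop :=
  ∀ k w w', (∀ i : Fin n, i.val < k → w i = w' i) → (c k w ↔ c k w')

variable {c : ℕ → (Fin n → Bool) → Prop}

lemma IsAdapted.flipWhen_injective (hc : IsAdapted c) : Function.Injective (flipWhen c) := by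
  intro w w' h
  suffices ∀ k, ∀ i : Fin n, i.val < k → w i = w' i from
    funext fun i => this _ i i.val.lt_succ_self
  intro k
  induction k with
  | zero => simp
  | succ k ih =>
    intro i hi
    rcases (Nat.lt_succ_iff.mp hi).lt_or_eq with hi | rfl
    · exact ih i hi
    · have hflip := congrFun h i
      by_cases hw : c i w' <;> simpa [flipWhen, hc _ w w' ih, hw] using hflip

open scoped Classical in
lemma step_flipWhen (c : ℕ → (Fin n → Bool) → Prop) (w : Fin n → Bool) (k : ℕ) :
    step (flipWhen c w) k = if c k w then -step w k else step w k := by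
  unfold step flipWhen signOf
  split_ifs <;> simp_all

end Flip

section Straighten

variable (w : Fin n → Bool) (r : ℤ)

/-- Edge `r` joins `r - 1` and `r`; step `j` crosses it iff the two endpoints sum to `2r - 1`. -/
def crossings (k : ℕ) : ℕ := #{j ∈ range k | walk w j + walk w (j + 1) = 2 * r - 1}

lemma crossings_succ (k : ℕ) :
    crossings w r (k + 1) =
      crossings w r k + if walk w k + walk w (k + 1) = 2 * r - 1 then 1 else 0 := by
  simp only [crossings, range_add_one, filter_insert]
  split_ifs <;> simp [card_insert_of_notMem]

lemma crossings_congr {w w' : Fin n → Bool} {k : ℕ} (h : ∀ i : Fin n, i.val < k → w i = w' i) :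
    crossings w r k = crossings w' r k := by
  unfold crossings
  congr 1
  refine filter_congr fun j hj => ?_
  have hj := mem_range.mp hj
  rw [walk_congr h hj.le, walk_congr h hj]

noncomputable def straighten : (Fin n → Bool) → Fin n → Bool :=
  flipWhen fun k w => crossings w r k % 2 = 1

lemma isAdapted_straighten : IsAdapted fun k (w : Fin n → Bool) => crossings w r k % 2 = 1 :=
  fun _ _ _ h => by simp only [crossings_congr r h]

/-- The walk mirrored at edge `r` after each crossing, so that it stays below `r`. -/
def fold (k : ℕ) : ℤ := if crossings w r k % 2 = 0 then walk w k else 2 * r - 1 - walk w k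

lemma walk_straighten (hr : 1 ≤ r) (k : ℕ) :
    walk (straighten r w) k = crossings w r k + fold w r k ∧ fold w r k ≤ r - 1 := by
  induction k with
  | zero => simpa [walk_zero, fold, crossings] using hr
  | succ k ih =>
    have hstep := step_eq_or w k
    have hsucc := walk_succ w k
    rw [walk_succ, straighten, step_flipWhen, ← straighten]
    unfold fold at ih ⊢
    rw [crossings_succ]
    split_ifs at * <;> omega

lemma exists_crossings_le_walk_straighten (hr : 1 ≤ r) (k : ℕ) :
    ∃ j ≤ k, (crossings w r k : ℤ) ≤ walk (straighten r w) j := by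
  induction k with
  | zero => exact ⟨0, le_rfl, by simp [crossings, walk_zero]⟩
  | succ k ih =>
    by_cases hcross : walk w k + walk w (k + 1) = 2 * r - 1
    · -- right after a crossing the folded walk sits at `r - 1`
      refine ⟨k + 1, le_rfl, ?_⟩
      have hk := walk_straighten w r hr k
      have hk1 := walk_straighten w r hr (k + 1)
      have hstep := step_eq_or w k
      have hsucc := walk_succ w k
      unfold fold at hk hk1
      rw [crossings_succ, if_pos hcross] at hk1 ⊢
      split_ifs at hk hk1 <;> omega
    · obtain ⟨j, hj, hle⟩ := ih
      exact ⟨j, hj.trans k.le_succ, by rwa [crossings_succ, if_neg hcross, add_zero]⟩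

end Straighten

section Reflect

variable (t : ℝ)

def Reaches (w : Fin n → Bool) : Prop := ∃ k ≤ n, t < walk w k

noncomputable def reflectAbove : (Fin n → Bool) → Fin n → Bool :=
  flipWhen fun k w => ∃ j ≤ k, t < walk w j

lemma isAdapted_reflectAbove : IsAdapted fun k (w : Fin n → Bool) => ∃ j ≤ k, t < walk w j :=
  fun _ _ _ h => exists_congr fun _ => and_congr_right fun hj => by rw [walk_congr h hj]

lemma walk_reflectAbove {w : Fin n → Bool} {τ : ℕ} (hτ : t < walk w τ)
    (hmin : ∀ j < τ, (walk w j : ℝ) ≤ t) (k : ℕ) :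
    walk (reflectAbove t w) k = if k ≤ τ then walk w k else 2 * walk w τ - walk w k := by
  have hflip : ∀ k, (∃ j ≤ k, t < walk w j) ↔ τ ≤ k := fun k =>
    ⟨fun ⟨j, hj, htj⟩ => (not_lt.mp fun hjτ => (hmin j hjτ).not_gt htj).trans hj,
      fun hk => ⟨τ, hk, hτ⟩⟩
  induction k with
  | zero => simp [walk_zero]
  | succ k ih =>
    rw [walk_succ, reflectAbove, step_flipWhen, ← reflectAbove, hflip, walk_succ w k]
    obtain rfl | hne := eq_or_ne k τ
    · simp_all only [le_refl, if_true, Nat.not_succ_le_self, if_false]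
      ring
    · split_ifs at * <;> omega

lemma lt_walk_reflectAbove {w : Fin n → Bool} (hw : Reaches t w) (hn : (walk w n : ℝ) ≤ t) :
    t < walk (reflectAbove t w) n := by
  classical
  have hex : ∃ k, t < walk w k := hw.imp fun _ => And.right
  obtain ⟨k, hk, htk⟩ := hw
  have hτn : Nat.find hex < n := by
    refine (Nat.find_min' hex htk).trans_lt (hk.lt_of_ne ?_)
    rintro rfl
    exact htk.not_ge hn
  rw [walk_reflectAbove t (Nat.find_spec hex) (fun j hj => not_lt.mp (Nat.find_min hex hj)),
    if_neg hτn.not_ge]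
  push_cast
  linarith [Nat.find_spec hex]

open scoped Classical in
lemma card_reaches_le :
    #{w : Fin n → Bool | Reaches t w} ≤ 2 * #{w : Fin n → Bool | t < walk w n} := by
  rw [← card_filter_add_card_filter_not (fun w => t < walk w n), two_mul, filter_filter,
    filter_filter]
  refine add_le_add (card_le_card fun w => by simp +contextual) ?_
  refine card_le_card_of_injOn (reflectAbove t) (fun w hw => ?_)
      ((isAdapted_reflectAbove t).flipWhen_injective.injOn)
  simp only [coe_filter, Set.mem_ofPred_eq, mem_univ, true_and, not_lt] at hw ⊢
  exact lt_walk_reflectAbove t hw.1 hw.2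

end Reflect

section Counting

def negate (w : Fin n → Bool) : Fin n → Bool := fun i => !w i

lemma negate_injective : Function.Injective (negate (n := n)) :=
  fun _ _ h => funext fun i => by simpa [negate] using congrFun h i

lemma walk_negate (w : Fin n → Bool) (k : ℕ) : walk (negate w) k = -walk w k := by
  rw [walk, walk, ← sum_neg_distrib]
  refine sum_congr rfl fun i _ => ?_
  unfold step negate signOf
  split_ifs <;> simp_all

lemma crossings_negate (w : Fin n → Bool) (r : ℤ) (k : ℕ) :
    crossings (negate w) (1 - r) k = crossings w r k := by
  unfold crossings
  congr 1
  refine filter_congr fun j _ => ?_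
  rw [walk_negate, walk_negate]
  omega

lemma mem_Icc_of_crossings_ne_zero {w : Fin n → Bool} {r : ℤ} (h : crossings w r n ≠ 0) :
    r ∈ Icc (1 - n : ℤ) n := by
  obtain ⟨j, hj⟩ := card_ne_zero.mp h
  simp only [mem_filter, mem_range] at hj
  have hj₀ := abs_le.mp (abs_walk_le w j)
  have hj₁ := abs_le.mp (abs_walk_le w (j + 1))
  rw [mem_Icc]
  push_cast at hj₁
  omega

open scoped Classical in
lemma card_crossings_gt_le (L : ℝ) (r : ℤ) :
    #{w : Fin n → Bool | L < crossings w r n} ≤ #{w : Fin n → Bool | Reaches L w} := by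
  wlog hr : 1 ≤ r generalizing r
  · refine (card_le_card_of_injOn negate (fun w hw => ?_) negate_injective.injOn).trans
      (this (1 - r) (by omega))
    simpa [crossings_negate] using hw
  refine card_le_card_of_injOn (straighten r) (fun w hw => ?_)
    (isAdapted_straighten r).flipWhen_injective.injOn
  simp only [coe_filter, Set.mem_ofPred_eq, mem_univ, true_and] at hw ⊢
  obtain ⟨j, hj, hle⟩ := exists_crossings_le_walk_straighten w r hr n
  exact ⟨j, hj, hw.trans_le (by exact_mod_cast hle)⟩

open scoped Classical in
lemma card_exists_crossings_gt_le {L : ℝ} (hL : 0 ≤ L) :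
    #{w : Fin n → Bool | ∃ r, L < crossings w r n} ≤
      4 * n * #{w : Fin n → Bool | L < walk w n} := by
  calc #{w : Fin n → Bool | ∃ r, L < crossings w r n}
      ≤ #((Icc (1 - n : ℤ) n).biUnion fun r => {w : Fin n → Bool | L < crossings w r n}) := by
        refine card_le_card fun w hw => ?_
        simp only [mem_filter, mem_univ, true_and, mem_biUnion] at hw ⊢
        obtain ⟨r, hr⟩ := hw
        have hpos : 0 < crossings w r n := by exact_mod_cast hL.trans_lt hr
        exact ⟨r, mem_Icc_of_crossings_ne_zero hpos.ne', hr⟩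
    _ ≤ ∑ r ∈ Icc (1 - n : ℤ) n, #{w : Fin n → Bool | L < crossings w r n} := card_biUnion_le
    _ ≤ ∑ r ∈ Icc (1 - n : ℤ) n, 2 * #{w : Fin n → Bool | L < walk w n} :=
        sum_le_sum fun r _ => (card_crossings_gt_le L r).trans (card_reaches_le L)
    _ = 4 * n * #{w : Fin n → Bool | L < walk w n} := by
        rw [sum_const, Int.card_Icc, smul_eq_mul,
          show (n + 1 - (1 - n) : ℤ).toNat = 2 * n by omega]
        ring

open Real in
lemma sum_exp_mul_walk (l : ℝ) : ∑ w : Fin n → Bool, exp (l * walk w n) = (2 * cosh l) ^ n := by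
  have hsign : ∑ b : Bool, exp (l * signOf b) = 2 * cosh l := by
    simp only [Fintype.sum_bool, signOf, cosh_eq, if_true, Bool.false_eq_true, if_false,
      Int.cast_one, Int.cast_neg, mul_one, mul_neg]
    ring
  simp only [walk_eq_sum, Int.cast_sum, mul_sum, exp_sum]
  rw [← Fintype.prod_sum (fun (_ : Fin n) b => exp (l * signOf b)), hsign, prod_const, card_univ,
    Fintype.card_fin]

open Real in
lemma card_walk_gt_le {t : ℝ} (ht : 0 ≤ t) :
    (#{w : Fin n → Bool | t < walk w n} : ℝ) ≤ 2 ^ n * exp (-t ^ 2 / (2 * n)) := by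
  rcases n.eq_zero_or_pos with rfl | hn
  · simp [walk_zero, ht.not_gt]
  -- the Chernoff exponent minimizing `n l² / 2 - l t`
  set l := t / n
  have hl : 0 ≤ l := by positivity
  have hmarkov :
      (#{w : Fin n → Bool | t < walk w n} : ℝ) * exp (l * t) ≤ 2 ^ n * exp (n * (l ^ 2 / 2)) :=
    calc (#{w : Fin n → Bool | t < walk w n} : ℝ) * exp (l * t)
        = ∑ w ∈ {w : Fin n → Bool | t < walk w n}, exp (l * t) := by rw [sum_const, nsmul_eq_mul]
      _ ≤ ∑ w ∈ {w : Fin n → Bool | t < walk w n}, exp (l * walk w n) :=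
          sum_le_sum fun w hw => exp_le_exp.mpr (by gcongr; exact (mem_filter.mp hw).2.le)
      _ ≤ ∑ w : Fin n → Bool, exp (l * walk w n) :=
          sum_le_sum_of_subset_of_nonneg (filter_subset _ _) fun _ _ _ => (exp_pos _).le
      _ = (2 * cosh l) ^ n := sum_exp_mul_walk l
      _ ≤ (2 * exp (l ^ 2 / 2)) ^ n := by gcongr; exact cosh_le_exp_half_sq l
      _ = 2 ^ n * exp (n * (l ^ 2 / 2)) := by rw [mul_pow, ← exp_nat_mul]
  refine le_of_mul_le_mul_right (hmarkov.trans_eq ?_) (exp_pos (l * t))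
  rw [mul_assoc, ← exp_add]
  congr 2
  simp only [l]
  field_simp
  ring

end Counting

open MeasureTheory ProbabilityTheory

section Probability

variable {Ω : Type*} {V : ℕ → Ω → ℤ}

def signs (V : ℕ → Ω → ℤ) (n : ℕ) (ω : Ω) : Fin n → Bool := fun i => decide (V (i + 1) ω = 1)

lemma signOf_signs (hVval : ∀ n ω, V n ω = 1 ∨ V n ω = -1) (ω : Ω) (i : Fin n) :
    signOf (signs V n ω i) = V (i + 1) ω := by
  rcases hVval (i + 1) ω with h | h <;> simp [signs, signOf, h]

lemma walk_signs (hVval : ∀ n ω, V n ω = 1 ∨ V n ω = -1) {S : ℕ → Ω → ℤ}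
    (hS : ∀ n ω, S n ω = ∑ k ∈ Icc 1 n, V k ω) (ω : Ω) {k : ℕ} (hk : k ≤ n) :
    S k ω = walk (signs V n ω) k := by
  rw [hS, walk, ← Ico_add_one_right_eq_Icc, sum_Ico_eq_sum_range, Nat.add_sub_cancel]
  refine sum_congr rfl fun i hi => ?_
  have hin : i < n := (mem_range.mp hi).trans_le hk
  rw [step, dif_pos hin, signOf_signs hVval, add_comm]

lemma U_eq_crossings (hVval : ∀ n ω, V n ω = 1 ∨ V n ω = -1) {S R : ℕ → Ω → ℤ}
    {U : ℕ → ℤ → Ω → ℕ} (hS : ∀ n ω, S n ω = ∑ k ∈ Icc 1 n, V k ω)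
    (hR : ∀ n ω, R n ω = (1 + S (n - 1) ω + S n ω) / 2)
    (hU : ∀ n r ω, U n r ω = ∑ k ∈ Icc 1 n, if R k ω = r then 1 else 0) (n : ℕ) (r : ℤ) (ω : Ω) :
    U n r ω = crossings (signs V n ω) r n := by
  rw [hU, crossings, card_filter, ← Ico_add_one_right_eq_Icc, sum_Ico_eq_sum_range,
    Nat.add_sub_cancel]
  refine sum_congr rfl fun j hj => if_congr ?_ rfl rfl
  have hj := mem_range.mp hj
  have hstep : S (j + 1) ω = S j ω + V (j + 1) ω := by rw [hS, hS, sum_Icc_succ_top (by omega)]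
  rw [add_comm 1 j, hR, Nat.add_sub_cancel, ← walk_signs hVval hS ω hj.le,
    ← walk_signs hVval hS ω (k := j + 1) hj]
  rcases hVval (j + 1) ω with h | h <;> omega

variable [MeasurableSpace Ω] {P : Measure Ω}

lemma measure_eq_signOf [IsProbabilityMeasure P] (hVmeas : ∀ n, Measurable (V n))
    (hVval : ∀ n ω, V n ω = 1 ∨ V n ω = -1) (hVfair : ∀ n, P {ω | V n ω = 1} = 1 / 2)
    (k : ℕ) (b : Bool) : P (V k ⁻¹' {signOf b}) = 2⁻¹ := by
  cases b
  · have hcompl : V k ⁻¹' {signOf false} = {ω | V k ω = 1}ᶜ := by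
      ext ω
      rcases hVval k ω with h | h <;> simp [signOf, h]
    rw [hcompl, prob_compl_eq_one_sub (s := {ω | V k ω = 1}) (hVmeas k (measurableSet_singleton 1)),
      hVfair, one_div, ENNReal.one_sub_inv_two]
  · exact (hVfair k).trans (one_div 2)

lemma measure_signs_preimage_singleton [IsProbabilityMeasure P] (hVmeas : ∀ n, Measurable (V n))
    (hVval : ∀ n ω, V n ω = 1 ∨ V n ω = -1) (hVfair : ∀ n, P {ω | V n ω = 1} = 1 / 2)
    (hVindep : iIndepFun V P) (w : Fin n → Bool) : P (signs V n ⁻¹' {w}) = 2⁻¹ ^ n := by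
  have hpre :
      signs V n ⁻¹' {w} = ⋂ i ∈ (univ : Finset (Fin n)), V (i + 1) ⁻¹' {signOf (w i)} := by
    ext ω
    simp only [Set.mem_preimage, Set.mem_singleton_iff, funext_iff, mem_univ, Set.iInter_true,
      Set.mem_iInter, ← signOf_signs hVval, signOf_injective.eq_iff]
  have hindep : iIndepFun (fun i : Fin n => V (i + 1)) P :=
    hVindep.precomp fun i j h => Fin.ext (by simpa using h)
  rw [hpre, hindep.measure_inter_preimage_eq_mul _ fun _ _ => measurableSet_singleton _]
  simp [measure_eq_signOf hVmeas hVval hVfair]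

lemma measurable_signs (hVmeas : ∀ n, Measurable (V n)) (n : ℕ) : Measurable (signs V n) :=
  measurable_pi_lambda _ fun i => (Measurable.of_discrete (f := fun z : ℤ => decide (z = 1))).comp
    (hVmeas (i + 1))

lemma measure_signs_preimage [IsProbabilityMeasure P] (hVmeas : ∀ n, Measurable (V n))
    (hVval : ∀ n ω, V n ω = 1 ∨ V n ω = -1) (hVfair : ∀ n, P {ω | V n ω = 1} = 1 / 2)
    (hVindep : iIndepFun V P) (A : Finset (Fin n → Bool)) :
    P (signs V n ⁻¹' A) = ENNReal.ofReal (#A / 2 ^ n) := by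
  rw [← sum_measure_preimage_singleton A fun _ _ =>
    measurable_signs hVmeas n (measurableSet_singleton _)]
  simp only [measure_signs_preimage_singleton hVmeas hVval hVfair hVindep, sum_const, nsmul_eq_mul]
  rw [ENNReal.ofReal_div_of_pos (by positivity), ENNReal.ofReal_natCast,
    ENNReal.ofReal_pow zero_le_two, ENNReal.ofReal_ofNat, div_eq_mul_inv, ENNReal.inv_pow]

end Probability

end SimpleWalk

open SimpleWalk

open MeasureTheory ProbabilityTheory

/-- Maximal inequality for edge local times of the simple symmetric random walk:
`P[max_r U_{n,r} > L] ≤ 4n·exp(-L²/(2n))`. -/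
theorem stmt6
    {Ω : Type*} [MeasurableSpace Ω] (P : Measure Ω) [IsProbabilityMeasure P]
    (V : ℕ → Ω → ℤ)
    (hVmeas : ∀ n, Measurable (V n))
    (hVval : ∀ n ω, V n ω = 1 ∨ V n ω = -1)
    (hVfair : ∀ n, P {ω | V n ω = 1} = 1 / 2)
    (hVindep : iIndepFun V P)
    (S : ℕ → Ω → ℤ) (hS : ∀ n ω, S n ω = ∑ k ∈ Finset.Icc 1 n, V k ω)
    (R : ℕ → Ω → ℤ) (hR : ∀ n ω, R n ω = (1 + S (n - 1) ω + S n ω) / 2)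
    (U : ℕ → ℤ → Ω → ℕ)
    (hU : ∀ n r ω, U n r ω = ∑ k ∈ Finset.Icc 1 n, if R k ω = r then 1 else 0) :
    ∀ n : ℕ, 1 ≤ n → ∀ L : ℝ, 0 < L →
      P {ω | ∃ r : ℤ, L < (U n r ω : ℝ)} ≤
        ENNReal.ofReal (4 * n * Real.exp (-L ^ 2 / (2 * n))) := by
  intro n _ L hL
  classical
  have hevent : {ω | ∃ r : ℤ, L < (U n r ω : ℝ)} =
      signs V n ⁻¹' ↑({w | ∃ r, L < crossings w r n} : Finset (Fin n → Bool)) := by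
    ext ω
    simp [U_eq_crossings hVval hS hR hU]
  rw [hevent, measure_signs_preimage hVmeas hVval hVfair hVindep]
  refine ENNReal.ofReal_le_ofReal ((div_le_iff₀ (by positivity)).mpr ?_)
  calc (#{w : Fin n → Bool | ∃ r, L < crossings w r n} : ℝ)
      ≤ 4 * n * #{w : Fin n → Bool | L < walk w n} := by
        exact_mod_cast card_exists_crossings_gt_le hL.le
    _ ≤ 4 * n * (2 ^ n * Real.exp (-L ^ 2 / (2 * n))) := by gcongr; exact card_walk_gt_le hL.le
    _ = 4 * n * Real.exp (-L ^ 2 / (2 * n)) * 2 ^ n := by ring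
end

section
/- For the simple symmetric random walk with edge local times U_{n,r}, for every integers n ≥ 1 and u ≥ 0: Σ_{r=1}^∞ P[U_{n-1,r} = u, R_n = r, V_n = -1] equals 0 when u is even and equals 2^(-n)·C(n-1, ⌊(n+u)/2⌋) when u is odd; and Σ_{r=1}^∞ P[U_{n-1,r} = u, R_n = r, V_n = 1] equals 2^(-n)·C(n-1, ⌊(n+u)/2⌋) when u is even and 0 when u is odd. -/
/-!
Write `Q_m(u, d) = Σ_{r ≥ 1} P[U_{m,r} = u, S_m = r + d]`. The step `V_{m+1}` is independent of
`V_1, …, V_m`, moves the walk by `±1`, and adds one to `U_{·,r}` exactly when it crosses the edge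
`{r - 1, r}`, i.e. when `d = 0` after an up-step and `d = -1` after a down-step. Hence
`Q_{m+1}(u, d) = (Q_m(u - [d = 0], d - 1) + Q_m(u - [d = -1], d + 1)) / 2`, where letting `u` range
over the integers (with `Q_m(-1, d) = 0`) avoids a case split. By Pascal's rule an explicit binomial
expression `N_m(u, d)` satisfies the same recursion and initial values, so `Q_m = 2^{-m} N_m`.
Finally `R_n = S_{n-1}` on `{V_n = -1}` and `R_n = S_{n-1} + 1` on `{V_n = 1}`, so the two series
are `Q_{n-1}(u, 0) / 2` and `Q_{n-1}(u, -1) / 2`.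
-/

open MeasureTheory ProbabilityTheory Finset

namespace SymmetricWalk

section Counting

lemma choose_succ_eq_add {m a b c : ℕ} (hb : b + 1 = a) (hc : c = a) :
    (m + 1).choose a = m.choose b + m.choose c := by
  subst hb hc; exact Nat.choose_succ_succ' m b

def centralChooseSum (m k : ℕ) : ℕ := ∑ i ∈ range k, m.choose ((m + i + 1) / 2)

lemma centralChooseSum_succ_succ (m k : ℕ) :
    centralChooseSum (m + 1) (k + 1) = centralChooseSum m (k + 2) + centralChooseSum m k := by
  induction k with
  | zero =>
    have hsymm : m.choose ((m + 1) / 2) = m.choose (m / 2) := Nat.choose_symm_of_eq_add (by omega)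
    simp only [centralChooseSum, sum_range_succ, sum_range_zero, zero_add, add_zero, hsymm]
    exact choose_succ_eq_add (by omega) (by omega)
  | succ k ih =>
    simp only [centralChooseSum] at ih ⊢
    rw [sum_range_succ, ih, choose_succ_eq_add (b := (m + k + 1) / 2)
      (c := (m + (k + 2) + 1) / 2) (by omega) (by omega), sum_range_succ _ (k + 2),
      sum_range_succ _ k]
    ring

/-- `2 ^ m * Σ_{r ≥ 1} P[U_{m,r} = u, S_m = r + d]`. It vanishes unless `u` is odd exactly when
`d ≥ 0`: the crossings of an edge alternate in direction. -/
def localTimeCount (m : ℕ) (u d : ℤ) : ℕ :=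
  if u < 0 then 0
  else if u = 0 then centralChooseSum m (-d).toNat
  else if Even u then (if d < 0 then m.choose ((m + u - d) / 2).toNat else 0)
  else if 0 ≤ d then m.choose ((m + u + d + 1) / 2).toNat else 0

variable {m : ℕ} {u d : ℤ}

lemma localTimeCount_of_neg (hu : u < 0) : localTimeCount m u d = 0 := if_pos hu

lemma localTimeCount_zero_left : localTimeCount m 0 d = centralChooseSum m (-d).toNat := rfl

lemma localTimeCount_of_even (hu : 0 < u) (he : Even u) :
    localTimeCount m u d = if d < 0 then m.choose ((m + u - d) / 2).toNat else 0 := by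
  simp only [localTimeCount, if_neg hu.not_gt, if_neg hu.ne', if_pos he]

lemma localTimeCount_of_odd (hu : 0 < u) (ho : ¬ Even u) :
    localTimeCount m u d = if 0 ≤ d then m.choose ((m + u + d + 1) / 2).toNat else 0 := by
  simp only [localTimeCount, if_neg hu.not_gt, if_neg hu.ne', if_neg ho]

lemma localTimeCount_of_even_of_nonneg (he : Even u) (hd : 0 ≤ d) : localTimeCount m u d = 0 := by
  rcases lt_trichotomy u 0 with hu | rfl | hu
  · exact localTimeCount_of_neg hu
  · rw [localTimeCount_zero_left, show (-d).toNat = 0 by omega, centralChooseSum, sum_range_zero]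
  · rw [localTimeCount_of_even hu he, if_neg (by omega)]

lemma localTimeCount_of_even_neg_one (hu : 0 ≤ u) (he : Even u) :
    localTimeCount m u (-1) = m.choose ((m + u + 1) / 2).toNat := by
  rcases hu.eq_or_lt with rfl | hu
  · simp only [localTimeCount_zero_left, centralChooseSum, neg_neg, Int.toNat_one, sum_range_one]
    congr 1
  · rw [localTimeCount_of_even hu he, if_pos (by omega), sub_neg_eq_add]

lemma localTimeCount_of_odd_of_neg (ho : ¬ Even u) (hd : d < 0) : localTimeCount m u d = 0 := by
  rcases lt_trichotomy u 0 with hu | rfl | hu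
  · exact localTimeCount_of_neg hu
  · exact absurd Even.zero ho
  · rw [localTimeCount_of_odd hu ho, if_neg (by omega)]

lemma localTimeCount_succ_zero_left (m : ℕ) (d : ℤ) :
    localTimeCount (m + 1) 0 d =
      localTimeCount m (0 - if d = 0 then 1 else 0) (d - 1) +
        localTimeCount m (0 - if d = -1 then 1 else 0) (d + 1) := by
  rcases le_or_gt 0 d with hd | hd
  · rw [localTimeCount_of_even_of_nonneg Even.zero hd]
    split_ifs <;> simp (disch := omega) only [sub_zero, localTimeCount_of_neg,
      localTimeCount_of_even_of_nonneg Even.zero]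
  · obtain ⟨k, rfl⟩ : ∃ k : ℕ, d = -(k + 1) := ⟨(-d - 1).toNat, by omega⟩
    rw [if_neg (by omega), sub_zero, localTimeCount_zero_left, localTimeCount_zero_left,
      show (-(-((k : ℤ) + 1))).toNat = k + 1 by omega,
      show (-(-((k : ℤ) + 1) - 1)).toNat = k + 2 by omega, centralChooseSum_succ_succ]
    congr 1
    split_ifs with hk
    · rw [localTimeCount_of_neg (by omega), show k = 0 by omega, centralChooseSum, sum_range_zero]
    · rw [sub_zero, localTimeCount_zero_left, show (-(-((k : ℤ) + 1) + 1)).toNat = k by omega]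

lemma localTimeCount_succ (m : ℕ) (u d : ℤ) :
    localTimeCount (m + 1) u d =
      localTimeCount m (u - if d = 0 then 1 else 0) (d - 1) +
        localTimeCount m (u - if d = -1 then 1 else 0) (d + 1) := by
  rcases lt_trichotomy u 0 with hu | rfl | hu
  · rw [localTimeCount_of_neg hu, localTimeCount_of_neg (by split_ifs <;> omega),
      localTimeCount_of_neg (by split_ifs <;> omega)]
  · exact localTimeCount_succ_zero_left m d
  by_cases he : Even u
  · have hpar := Int.even_iff.mp he
    have ho : ¬ Even (u - 1) := by simp [he]
    rw [localTimeCount_of_even hu he]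
    split_ifs <;> simp (disch := omega) only [if_pos, if_neg, sub_zero,
      localTimeCount_of_even hu he, localTimeCount_of_odd (by omega : 0 < u - 1) ho]
    -- each case is Pascal's rule, `0 = 0 + 0`, or has contradictory hypotheses
    all_goals first
      | omega
      | exact (choose_succ_eq_add (by omega) (by omega)).trans (add_comm _ _)
  · have hpar := Int.odd_iff.mp (Int.not_even_iff_odd.mp he)
    have he' : Even (u - 1) := by simpa [Int.even_sub_one] using he
    rw [localTimeCount_of_odd hu he]
    split_ifs <;> subst_vars <;> simp (disch := omega) only [if_pos, if_neg, sub_zero, zero_sub,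
      neg_add_cancel, localTimeCount_of_odd hu he, localTimeCount_of_even_neg_one (by omega) he',
      localTimeCount_of_even_of_nonneg he']
    all_goals first
      | omega
      | exact choose_succ_eq_add (by omega) (by omega)

lemma localTimeCount_zero : localTimeCount 0 u d = if u = 0 ∧ d < 0 then 1 else 0 := by
  rcases lt_trichotomy u 0 with hu | rfl | hu
  · rw [localTimeCount_of_neg hu, if_neg (by omega)]
  · rw [localTimeCount_zero_left]
    split_ifs with hd
    · obtain ⟨k, hk⟩ : ∃ k, (-d).toNat = k + 1 := ⟨(-d).toNat - 1, by omega⟩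
      rw [hk, centralChooseSum, sum_range_succ',
        sum_eq_zero fun i _ => Nat.choose_eq_zero_of_lt (by omega)]
      rfl
    · rw [show (-d).toNat = 0 by omega]
      rfl
  · rw [if_neg (by omega)]
    by_cases he : Even u
    · rw [localTimeCount_of_even hu he]
      split_ifs
      exacts [Nat.choose_eq_zero_of_lt (by omega), rfl]
    · rw [localTimeCount_of_odd hu he]
      split_ifs
      exacts [Nat.choose_eq_zero_of_lt (by omega), rfl]

lemma localTimeCount_natCast_zero (u : ℕ) :
    localTimeCount m u 0 = if Even u then 0 else m.choose ((m + 1 + u) / 2) := by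
  split_ifs with he
  · exact localTimeCount_of_even_of_nonneg (Int.even_coe_nat u |>.mpr he) le_rfl
  · have hu : (0 : ℤ) < u := by
      have : u ≠ 0 := by rintro rfl; exact he Even.zero
      omega
    rw [localTimeCount_of_odd hu (mt (Int.even_coe_nat u).mp he), if_pos le_rfl]
    congr 1
    omega

lemma localTimeCount_natCast_neg_one (u : ℕ) :
    localTimeCount m u (-1) = if Even u then m.choose ((m + 1 + u) / 2) else 0 := by
  split_ifs with he
  · rw [localTimeCount_of_even_neg_one (by omega) (Int.even_coe_nat u |>.mpr he)]
    congr 1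
    omega
  · exact localTimeCount_of_odd_of_neg (mt (Int.even_coe_nat u).mp he) (by norm_num)

end Counting

section Paths
variable {Ω : Type*} (V : ℕ → Ω → ℤ)

def walk (n : ℕ) (ω : Ω) : ℤ := ∑ k ∈ Icc 1 n, V k ω

/-- The `n`-th step crosses the edge `{edge V n ω - 1, edge V n ω}`. -/
def edge (n : ℕ) (ω : Ω) : ℤ := (1 + walk V (n - 1) ω + walk V n ω) / 2

def edgeLocalTime (n : ℕ) (r : ℤ) (ω : Ω) : ℕ :=
  ∑ k ∈ Icc 1 n, if edge V k ω = r then 1 else 0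

variable {V}

@[simp] lemma walk_zero (ω : Ω) : walk V 0 ω = 0 := by simp [walk]

lemma walk_succ (m : ℕ) (ω : Ω) : walk V (m + 1) ω = walk V m ω + V (m + 1) ω :=
  sum_Icc_succ_top (by omega) _

@[simp] lemma edgeLocalTime_zero (r : ℤ) (ω : Ω) : edgeLocalTime V 0 r ω = 0 := by
  simp [edgeLocalTime]

lemma edgeLocalTime_succ (m : ℕ) (r : ℤ) (ω : Ω) :
    edgeLocalTime V (m + 1) r ω = edgeLocalTime V m r ω + if edge V (m + 1) ω = r then 1 else 0 :=
  sum_Icc_succ_top (by omega) _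

lemma edge_succ_of_up {m : ℕ} {ω : Ω} (h : V (m + 1) ω = 1) :
    edge V (m + 1) ω = walk V m ω + 1 := by
  rw [edge, Nat.add_sub_cancel, walk_succ, h]; omega

lemma edge_succ_of_down {m : ℕ} {ω : Ω} (h : V (m + 1) ω = -1) :
    edge V (m + 1) ω = walk V m ω := by
  rw [edge, Nat.add_sub_cancel, walk_succ, h]; omega

lemma edgeLocalTime_walk_succ_iff_of_up {m : ℕ} {ω : Ω} (h : V (m + 1) ω = 1) (r u d : ℤ) :
    ((edgeLocalTime V (m + 1) r ω : ℤ) = u ∧ walk V (m + 1) ω = r + d) ↔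
      ((edgeLocalTime V m r ω : ℤ) = u - (if d = 0 then 1 else 0) ∧
        walk V m ω = r + (d - 1)) := by
  rw [edgeLocalTime_succ, edge_succ_of_up h, walk_succ, h]
  split_ifs <;> push_cast <;> omega

lemma edgeLocalTime_walk_succ_iff_of_down {m : ℕ} {ω : Ω} (h : V (m + 1) ω = -1) (r u d : ℤ) :
    ((edgeLocalTime V (m + 1) r ω : ℤ) = u ∧ walk V (m + 1) ω = r + d) ↔
      ((edgeLocalTime V m r ω : ℤ) = u - (if d = -1 then 1 else 0) ∧
        walk V m ω = r + (d + 1)) := by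
  rw [edgeLocalTime_succ, edge_succ_of_down h, walk_succ, h]
  split_ifs <;> push_cast <;> omega

end Paths

section Probability

variable {Ω : Type*} {V : ℕ → Ω → ℤ}

structure IsRademacherSeq [MeasurableSpace Ω] (P : Measure Ω) (V : ℕ → Ω → ℤ) : Prop where
  measurable : ∀ n, Measurable (V n)
  eq_one_or_eq_neg_one : ∀ n ω, V n ω = 1 ∨ V n ω = -1
  measure_eq_one : ∀ n, P {ω | V n ω = 1} = 1 / 2
  indep : iIndepFun V P

abbrev stepsUpTo (V : ℕ → Ω → ℤ) (m : ℕ) : MeasurableSpace Ω :=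
  ⨆ k ∈ Set.Iic m, MeasurableSpace.comap (V k) inferInstance

lemma measurable_step_stepsUpTo {k m : ℕ} (hk : k ≤ m) : Measurable[stepsUpTo V m] (V k) :=
  Measurable.of_comap_le (le_iSup₂ (f := fun k (_ : k ∈ Set.Iic m) =>
    MeasurableSpace.comap (V k) inferInstance) k hk)

lemma measurable_walk_stepsUpTo {k m : ℕ} (hk : k ≤ m) : Measurable[stepsUpTo V m] (walk V k) :=
  Finset.measurable_sum _ fun _ hj => measurable_step_stepsUpTo ((mem_Icc.mp hj).2.trans hk)

lemma measurable_edge_stepsUpTo {k m : ℕ} (hk : k ≤ m) : Measurable[stepsUpTo V m] (edge V k) :=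
  (measurable_of_countable fun p : ℤ × ℤ => (1 + p.1 + p.2) / 2).comp
    ((measurable_walk_stepsUpTo (by omega)).prodMk (measurable_walk_stepsUpTo hk))

lemma measurable_edgeLocalTime_stepsUpTo (m : ℕ) (r : ℤ) :
    Measurable[stepsUpTo V m] (edgeLocalTime V m r) :=
  Finset.measurable_sum _ fun _ hk =>
    (measurable_of_countable fun z : ℤ => if z = r then 1 else 0).comp
      (measurable_edge_stepsUpTo (mem_Icc.mp hk).2)

lemma measurableSet_edgeLocalTime_walk (m : ℕ) (r u s : ℤ) :
    MeasurableSet[stepsUpTo V m] {ω | (edgeLocalTime V m r ω : ℤ) = u ∧ walk V m ω = s} :=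
  ((measurable_of_countable fun n : ℕ => (n : ℤ)).comp
    (measurable_edgeLocalTime_stepsUpTo m r) (measurableSet_singleton u)).inter
    (measurable_walk_stepsUpTo le_rfl (measurableSet_singleton s))

variable [MeasurableSpace Ω] {P : Measure Ω}

namespace IsRademacherSeq

lemma measure_step_eq [IsProbabilityMeasure P] (hV : IsRademacherSeq P V) (n : ℕ) {e : ℤ}
    (he : e = 1 ∨ e = -1) : P {ω | V n ω = e} = 2⁻¹ := by
  rcases he with rfl | rfl
  · rw [hV.measure_eq_one n, one_div]
  · have hc : {ω | V n ω = -1} = {ω | V n ω = 1}ᶜ := by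
      ext ω
      rcases hV.eq_one_or_eq_neg_one n ω with h | h <;> simp [h]
    have hm : MeasurableSet {ω | V n ω = 1} := hV.measurable n (measurableSet_singleton 1)
    rw [hc, prob_compl_eq_one_sub hm,
      hV.measure_eq_one n, one_div, ENNReal.one_sub_inv_two]

lemma indep_stepsUpTo_step (hV : IsRademacherSeq P V) (m : ℕ) :
    Indep (stepsUpTo V m) (MeasurableSpace.comap (V (m + 1)) inferInstance) P := by
  have := indep_iSup_of_disjoint (fun k => (hV.measurable k).comap_le)
    ((iIndepFun_iff_iIndep _ _ _).mp hV.indep) (S := Set.Iic m) (T := {m + 1}) (by simp)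
  rwa [_root_.iSup_singleton] at this

lemma measure_inter_step [IsProbabilityMeasure P] (hV : IsRademacherSeq P V) {m : ℕ}
    {A : Set Ω} (hA : MeasurableSet[stepsUpTo V m] A) {e : ℤ} (he : e = 1 ∨ e = -1) :
    P (A ∩ {ω | V (m + 1) ω = e}) = P A * 2⁻¹ := by
  change P (A ∩ V (m + 1) ⁻¹' {e}) = _
  rw [(Indep_iff _ _ P).mp (hV.indep_stepsUpTo_step m) _ _ hA
    ⟨{e}, measurableSet_singleton e, rfl⟩]
  exact congrArg (P A * ·) (hV.measure_step_eq (m + 1) he)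

lemma measure_edgeLocalTime_walk_succ [IsProbabilityMeasure P] (hV : IsRademacherSeq P V)
    (m : ℕ) (r u d : ℤ) :
    P {ω | (edgeLocalTime V (m + 1) r ω : ℤ) = u ∧ walk V (m + 1) ω = r + d} =
      (P {ω | (edgeLocalTime V m r ω : ℤ) = u - (if d = 0 then 1 else 0) ∧
          walk V m ω = r + (d - 1)} +
        P {ω | (edgeLocalTime V m r ω : ℤ) = u - (if d = -1 then 1 else 0) ∧
          walk V m ω = r + (d + 1)}) * 2⁻¹ := by
  set A := {ω | (edgeLocalTime V (m + 1) r ω : ℤ) = u ∧ walk V (m + 1) ω = r + d}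
  have hup : A ∩ {ω | V (m + 1) ω = 1} = {ω | (edgeLocalTime V m r ω : ℤ) =
      u - (if d = 0 then 1 else 0) ∧ walk V m ω = r + (d - 1)} ∩ {ω | V (m + 1) ω = 1} :=
    Set.ext fun ω => and_congr_left (edgeLocalTime_walk_succ_iff_of_up · r u d)
  have hdown : A ∩ {ω | V (m + 1) ω = -1} = {ω | (edgeLocalTime V m r ω : ℤ) =
      u - (if d = -1 then 1 else 0) ∧ walk V m ω = r + (d + 1)} ∩ {ω | V (m + 1) ω = -1} :=
    Set.ext fun ω => and_congr_left (edgeLocalTime_walk_succ_iff_of_down · r u d)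
  have hsplit : P A = P (A ∩ {ω | V (m + 1) ω = 1}) + P (A ∩ {ω | V (m + 1) ω = -1}) := by
    rw [← measure_inter_add_sdiff A (hV.measurable (m + 1) (measurableSet_singleton 1))]
    congr 2
    ext ω
    rcases hV.eq_one_or_eq_neg_one (m + 1) ω with h | h <;> simp [h]
  rw [hsplit, hup, hdown,
    hV.measure_inter_step (measurableSet_edgeLocalTime_walk _ _ _ _) (.inl rfl),
    hV.measure_inter_step (measurableSet_edgeLocalTime_walk _ _ _ _) (.inr rfl), add_mul]

end IsRademacherSeq

noncomputable def edgeLocalTimeLaw (P : Measure Ω) (V : ℕ → Ω → ℤ) (m : ℕ) (u d : ℤ) : ENNReal :=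
  ∑' r : ℕ, P {ω | (edgeLocalTime V m (r + 1) ω : ℤ) = u ∧ walk V m ω = r + 1 + d}

lemma edgeLocalTimeLaw_zero [IsProbabilityMeasure P] (u d : ℤ) :
    edgeLocalTimeLaw P V 0 u d = localTimeCount 0 u d := by
  have hterm : ∀ r : ℕ, P {ω | (edgeLocalTime V 0 (r + 1) ω : ℤ) = u ∧ walk V 0 ω = r + 1 + d} =
      if u = 0 ∧ (r : ℤ) = -d - 1 then 1 else 0 := fun r => by
    simp only [edgeLocalTime_zero, walk_zero, Nat.cast_zero]
    split_ifs with h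
    · convert measure_univ (μ := P)
      ext
      simp only [Set.mem_ofPred_eq, Set.mem_univ, iff_true]
      omega
    · convert measure_empty (μ := P)
      ext
      simp only [Set.mem_ofPred_eq, Set.mem_empty_iff_false, iff_false]
      omega
  rw [edgeLocalTimeLaw, tsum_congr hterm, localTimeCount_zero]
  split_ifs with h
  · rw [tsum_eq_single (-d - 1).toNat fun r hr => if_neg (by omega), if_pos (by omega),
      Nat.cast_one]
  · simp only [ENNReal.tsum_eq_zero, Nat.cast_zero]
    exact fun r => if_neg (by omega)

lemma IsRademacherSeq.edgeLocalTimeLaw_succ [IsProbabilityMeasure P] (hV : IsRademacherSeq P V)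
    (m : ℕ) (u d : ℤ) :
    edgeLocalTimeLaw P V (m + 1) u d =
      (edgeLocalTimeLaw P V m (u - if d = 0 then 1 else 0) (d - 1) +
        edgeLocalTimeLaw P V m (u - if d = -1 then 1 else 0) (d + 1)) * 2⁻¹ := by
  simp only [edgeLocalTimeLaw, hV.measure_edgeLocalTime_walk_succ, ENNReal.tsum_mul_right,
    ENNReal.tsum_add]

lemma IsRademacherSeq.edgeLocalTimeLaw_eq [IsProbabilityMeasure P] (hV : IsRademacherSeq P V)
    (m : ℕ) (u d : ℤ) : edgeLocalTimeLaw P V m u d = localTimeCount m u d * 2⁻¹ ^ m := by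
  induction m generalizing u d with
  | zero => rw [edgeLocalTimeLaw_zero, pow_zero, mul_one]
  | succ m ih =>
    rw [hV.edgeLocalTimeLaw_succ, ih, ih, localTimeCount_succ, pow_succ]
    push_cast
    ring

lemma IsRademacherSeq.tsum_measure_edgeLocalTime_edge [IsProbabilityMeasure P]
    (hV : IsRademacherSeq P V) (m u : ℕ) {v : ℤ} (hv : v = 1 ∨ v = -1) :
    ∑' r : ℕ, P {ω | edgeLocalTime V m (r + 1) ω = u ∧ edge V (m + 1) ω = r + 1 ∧ V (m + 1) ω = v} =
      edgeLocalTimeLaw P V m u (-((1 + v) / 2)) * 2⁻¹ := by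
  rw [edgeLocalTimeLaw, ← ENNReal.tsum_mul_right]
  refine tsum_congr fun r => ?_
  rw [← hV.measure_inter_step (measurableSet_edgeLocalTime_walk _ _ _ _) hv]
  congr 1
  ext ω
  by_cases hω : V (m + 1) ω = v
  · have hedge : edge V (m + 1) ω = walk V m ω + (1 + v) / 2 := by
      rcases hv with rfl | rfl
      · rw [edge_succ_of_up hω]; norm_num
      · rw [edge_succ_of_down hω]; norm_num
    simp only [Set.mem_ofPred_eq, Set.mem_inter_iff, hω, hedge, and_true]
    omega
  · simp [hω]

end Probability

end SymmetricWalk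

open SymmetricWalk

/-- Refinement of the current-edge local time probability by the direction of the
`n`-th step: the series `Σ_{r≥1} P[U_{n-1,r} = u, R_n = r, V_n = ∓1]` vanishes
according to the parity of `u`, and otherwise equals `2^(-n)·C(n-1, ⌊(n+u)/2⌋)`. -/
theorem stmt8
    {Ω : Type*} [MeasurableSpace Ω] (P : Measure Ω) [IsProbabilityMeasure P]
    (V : ℕ → Ω → ℤ)
    (hVmeas : ∀ n, Measurable (V n))
    (hVval : ∀ n ω, V n ω = 1 ∨ V n ω = -1)
    (hVfair : ∀ n, P {ω | V n ω = 1} = 1 / 2)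
    (hVindep : iIndepFun V P)
    (S : ℕ → Ω → ℤ) (hS : ∀ n ω, S n ω = ∑ k ∈ Finset.Icc 1 n, V k ω)
    (R : ℕ → Ω → ℤ) (hR : ∀ n ω, R n ω = (1 + S (n - 1) ω + S n ω) / 2)
    (U : ℕ → ℤ → Ω → ℕ)
    (hU : ∀ n r ω, U n r ω = ∑ k ∈ Finset.Icc 1 n, if R k ω = r then 1 else 0) :
    ∀ n : ℕ, 1 ≤ n → ∀ u : ℕ,
      (∑' r : ℕ,
          P {ω | U (n - 1) ((r : ℤ) + 1) ω = u ∧ R n ω = (r : ℤ) + 1 ∧ V n ω = -1}) =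
        (if Even u then 0 else ((n - 1).choose ((n + u) / 2) : ENNReal) / 2 ^ n) ∧
      (∑' r : ℕ,
          P {ω | U (n - 1) ((r : ℤ) + 1) ω = u ∧ R n ω = (r : ℤ) + 1 ∧ V n ω = 1}) =
        (if Even u then ((n - 1).choose ((n + u) / 2) : ENNReal) / 2 ^ n else 0) := by
  obtain rfl : S = walk V := funext fun n => funext (hS n)
  obtain rfl : R = edge V := funext fun n => funext (hR n)
  obtain rfl : U = edgeLocalTime V := funext fun n => funext fun r => funext (hU n r)
  have hV : IsRademacherSeq P V := ⟨hVmeas, hVval, hVfair, hVindep⟩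
  intro n hn u
  obtain ⟨m, rfl⟩ : ∃ m, n = m + 1 := ⟨n - 1, by omega⟩
  have hpow : (2⁻¹ : ENNReal) ^ m * 2⁻¹ = (2 ^ (m + 1))⁻¹ := by rw [← pow_succ, ENNReal.inv_pow]
  rw [Nat.add_sub_cancel, hV.tsum_measure_edgeLocalTime_edge m u (.inr rfl),
    hV.tsum_measure_edgeLocalTime_edge m u (.inl rfl), hV.edgeLocalTimeLaw_eq,
    hV.edgeLocalTimeLaw_eq]
  norm_num [localTimeCount_natCast_zero, localTimeCount_natCast_neg_one, mul_assoc, hpow,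
    div_eq_mul_inv]
end

section
/- For every integer u ≥ 0, lim_{n→∞} (√n / 2^n) · C(n-1, ⌊(n+u)/2⌋) = 1/√(2π). -/
/-!
Put `N = n - 1`, so that `(n + u) / 2 = N / 2 + t` with `t ≤ u + 1`. The middle coefficient
`C(N, N / 2)` is a central binomial coefficient or half of one, and Stirling's formula, in the form
`centralBinom m = stirlingSeq (2m) / stirlingSeq m ^ 2 · 4^m / √m`, gives
`C(N, N / 2) ~ √(2 / π) · 2^N / √N`. Moving a bounded distance `t` away from the middle multiplies
the coefficient by a factor between `((N/2 - T) / (N/2 + T + 1))^T` and `1`, which tends to `1`.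
-/

open Filter Topology Real
open scoped Nat

lemma tendsto_of_tendsto_even_odd {α : Type*} {f : ℕ → α} {l : Filter α}
    (he : Tendsto (fun k ↦ f (2 * k)) atTop l) (ho : Tendsto (fun k ↦ f (2 * k + 1)) atTop l) :
    Tendsto f atTop l := by
  intro s hs
  obtain ⟨a, ha⟩ := eventually_atTop.1 (he hs)
  obtain ⟨b, hb⟩ := eventually_atTop.1 (ho hs)
  refine eventually_atTop.2 ⟨2 * (a + b), fun n hn ↦ ?_⟩
  obtain ⟨k, rfl | rfl⟩ := Nat.even_or_odd' n
  · exact ha k (by omega)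
  · exact hb k (by omega)

lemma tendsto_sqrt_add_div_sqrt (a : ℝ) :
    Tendsto (fun m : ℕ ↦ √(m + a) / √m) atTop (𝓝 1) := by
  have h := ((tendsto_natCast_div_add_atTop a).inv₀ one_ne_zero).sqrt
  rw [inv_one, sqrt_one] at h
  refine h.congr fun m ↦ ?_
  rw [inv_div, sqrt_div' _ m.cast_nonneg]

lemma sqrt_mul_centralBinom_div_four_pow_eq_stirlingSeq {m : ℕ} (hm : m ≠ 0) :
    √m / 4 ^ m * Nat.centralBinom m =
      Stirling.stirlingSeq (2 * m) / Stirling.stirlingSeq m ^ 2 := by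
  have hfac : ((2 * m)! : ℝ) = Nat.centralBinom m * m ! * m ! := by
    have h := Nat.choose_mul_factorial_mul_factorial (by omega : m ≤ 2 * m)
    rw [two_mul, Nat.add_sub_cancel, ← two_mul, ← Nat.centralBinom_eq_two_mul_choose] at h
    exact_mod_cast h.symm
  have hsqrt : √(2 * (2 * m : ℕ) : ℝ) = 2 * √m := by
    rw [show (2 * (2 * m : ℕ) : ℝ) = 2 ^ 2 * m by push_cast; ring, sqrt_mul (by positivity),
      sqrt_sq zero_le_two]
  have hpow : ((2 * m : ℕ) / exp 1) ^ (2 * m) = 4 ^ m * ((m / exp 1) ^ m) ^ 2 := by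
    push_cast; rw [pow_mul]; ring
  have hm' : (0 : ℝ) < m := by positivity
  simp only [Stirling.stirlingSeq, hfac, hsqrt, hpow, div_pow, mul_pow,
    sq_sqrt (by positivity : (0 : ℝ) ≤ 2 * m)]
  field_simp
  rw [sq_sqrt hm'.le]
  ring

lemma tendsto_sqrt_mul_centralBinom_div_four_pow :
    Tendsto (fun m : ℕ ↦ √m / 4 ^ m * Nat.centralBinom m) atTop (𝓝 (1 / √π)) := by
  have h := (Stirling.tendsto_stirlingSeq_sqrt_pi.comp (tendsto_id.const_mul_atTop' two_pos)).div
    (Stirling.tendsto_stirlingSeq_sqrt_pi.pow 2) (by positivity)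
  rw [sq, div_mul_cancel_left₀ (by positivity), ← one_div] at h
  exact h.congr' ((eventually_ne_atTop 0).mono fun m hm ↦
    (sqrt_mul_centralBinom_div_four_pow_eq_stirlingSeq hm).symm)

lemma centralBinom_succ_eq_two_mul_choose (m : ℕ) :
    Nat.centralBinom (m + 1) = 2 * (2 * m + 1).choose m := by
  rw [Nat.centralBinom_eq_two_mul_choose, show 2 * (m + 1) = 2 * m + 1 + 1 by ring,
    Nat.choose_succ_succ', Nat.choose_symm_half, ← two_mul]

lemma tendsto_sqrt_succ_mul_choose_half_div_two_pow :
    Tendsto (fun N : ℕ ↦ √(N + 1) / 2 ^ N * N.choose (N / 2)) atTop (𝓝 (√2 / √π)) := by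
  have hcb := tendsto_sqrt_mul_centralBinom_div_four_pow
  apply tendsto_of_tendsto_even_odd
  · have h := ((tendsto_sqrt_add_div_sqrt (1 / 2)).mul hcb).const_mul √2
    rw [one_mul, mul_one_div] at h
    refine h.congr' ((eventually_ne_atTop 0).mono fun m hm ↦ ?_)
    have hm' : (0 : ℝ) < √m := by positivity
    have hsqrt : √(2 * m + 1 : ℝ) = √2 * √(m + 1 / 2) := by
      rw [← sqrt_mul zero_le_two]; ring_nf
    dsimp only
    rw [Nat.mul_div_cancel_left m two_pos, ← Nat.centralBinom_eq_two_mul_choose, pow_mul]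
    push_cast
    rw [hsqrt]
    field_simp
    ring
  · have h := (hcb.comp (tendsto_add_atTop_nat 1)).const_mul √2
    rw [mul_one_div] at h
    refine h.congr fun m ↦ ?_
    have hsqrt : √(2 * m + 1 + 1 : ℝ) = √2 * √(m + 1) := by
      rw [← sqrt_mul zero_le_two]; ring_nf
    rw [show (2 * m + 1) / 2 = m by omega, Function.comp_apply,
      centralBinom_succ_eq_two_mul_choose, pow_succ 2, pow_mul, pow_succ]
    push_cast
    rw [hsqrt]
    field_simp
    ring

-- `C(N, k + 1) = C(N, k) · (N - k) / (k + 1)`, and `(N - k) / (k + 1) ≥ (c - T) / (c + T + 1)`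
-- for `c ≤ k < c + T`.
lemma pow_mul_choose_le_choose_add {N c T j : ℕ} (hc : 2 * c ≤ N) (hj : j ≤ T) :
    (((c - T : ℕ) : ℝ) / (c + T + 1)) ^ j * N.choose c ≤ N.choose (c + j) := by
  set ρ : ℝ := ((c - T : ℕ) : ℝ) / (c + T + 1)
  induction j with
  | zero => simp
  | succ j ih =>
    have hratio : ρ ≤ ((N - (c + j) : ℕ) : ℝ) / (c + j + 1) := by
      refine div_le_div₀ (Nat.cast_nonneg _) (mod_cast (by omega)) (by positivity) ?_
      exact_mod_cast (by omega : c + j + 1 ≤ c + T + 1)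
    have hsucc : (N.choose (c + (j + 1)) : ℝ) =
        N.choose (c + j) * ((N - (c + j) : ℕ) : ℝ) / (c + j + 1) := by
      rw [eq_div_iff (by positivity)]
      exact_mod_cast Nat.choose_succ_right_eq N (c + j)
    calc ρ ^ (j + 1) * N.choose c = ρ * (ρ ^ j * N.choose c) := by ring
      _ ≤ ((N - (c + j) : ℕ) : ℝ) / (c + j + 1) * N.choose (c + j) :=
          mul_le_mul hratio (ih (by omega)) (by positivity) (by positivity)
      _ = N.choose (c + (j + 1)) := by rw [hsucc]; ring

lemma tendsto_natCast_sub_div_add_add_one (T : ℕ) :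
    Tendsto (fun m : ℕ ↦ ((m - T : ℕ) : ℝ) / (m + T + 1)) atTop (𝓝 1) := by
  rw [← tendsto_add_atTop_iff_nat T]
  refine (tendsto_natCast_div_add_atTop (2 * T + 1 : ℝ)).congr fun k ↦ ?_
  rw [Nat.add_sub_cancel]
  push_cast
  ring_nf

lemma tendsto_choose_half_add_div_choose_half {T : ℕ} {t : ℕ → ℕ} (ht : ∀ N, t N ≤ T) :
    Tendsto (fun N : ℕ ↦ (N.choose (N / 2 + t N) : ℝ) / N.choose (N / 2)) atTop (𝓝 1) := by
  set ρ : ℕ → ℝ := fun N ↦ ((N / 2 - T : ℕ) : ℝ) / ((N / 2 : ℕ) + T + 1)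
  have hρT : Tendsto (fun N ↦ ρ N ^ T) atTop (𝓝 1) := by
    simpa using ((tendsto_natCast_sub_div_add_add_one T).comp
      (Nat.tendsto_div_const_atTop two_ne_zero)).pow T
  refine tendsto_of_tendsto_of_tendsto_of_le_of_le hρT tendsto_const_nhds (fun N ↦ ?_)
    fun N ↦ ?_
  · have hpos : (0 : ℝ) < N.choose (N / 2) := by exact_mod_cast Nat.choose_pos (N.div_le_self 2)
    have hρ1 : ρ N ≤ 1 := by
      rw [div_le_one (by positivity)]
      exact_mod_cast (by omega : N / 2 - T ≤ N / 2 + T + 1)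
    calc ρ N ^ T ≤ ρ N ^ t N := pow_le_pow_of_le_one (by positivity) hρ1 (ht N)
      _ ≤ _ := by
        rw [le_div_iff₀ hpos]
        exact pow_mul_choose_le_choose_add (by omega) (ht N)
  · exact div_le_one_of_le₀ (Nat.cast_le.2 (Nat.choose_le_middle _ N)) (Nat.cast_nonneg _)

/-- Local central limit type asymptotic: for every integer `u ≥ 0`,
`lim_{n→∞} (√n / 2^n) · C(n-1, ⌊(n+u)/2⌋) = 1/√(2π)`. -/
theorem stmt9 (u : ℕ) :
    Filter.Tendsto
      (fun n : ℕ ↦ Real.sqrt n / 2 ^ n * ((n - 1).choose ((n + u) / 2)))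
      Filter.atTop (nhds (1 / Real.sqrt (2 * Real.pi))) := by
  rw [← tendsto_add_atTop_iff_nat 1]
  have hshift : ∀ N, (N + 1 + u) / 2 - N / 2 ≤ u + 1 := fun N ↦ by omega
  have h := (tendsto_sqrt_succ_mul_choose_half_div_two_pow.mul
    (tendsto_choose_half_add_div_choose_half hshift)).div_const 2
  have hlim : √2 / √π * 1 / 2 = 1 / √(2 * π) := by
    rw [sqrt_mul zero_le_two]
    field_simp
    rw [sq_sqrt zero_le_two]
  rw [hlim] at h
  refine h.congr fun N ↦ ?_
  have hpos : (N.choose (N / 2) : ℝ) ≠ 0 := mod_cast (Nat.choose_pos (N.div_le_self 2)).ne'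
  rw [show N / 2 + ((N + 1 + u) / 2 - N / 2) = (N + 1 + u) / 2 by omega, Nat.add_sub_cancel]
  push_cast
  field_simp
  ring
end

section
/- For every positive integer n, 2^(-n) · C(n-1, ⌊n/2⌋) ≤ √(3·e^(1/12)/(4πn)) ≤ 1/√n. -/
lemma centA : ∀ m : ℕ, (Nat.centralBinom m) ^ 2 * (3 * m + 1) ≤ 16 ^ m := by
  intro m
  induction m with
  | zero => simp [Nat.centralBinom]
  | succ m ih =>
    have key := Nat.succ_mul_centralBinom_succ m
    have hpos : 0 < (m + 1) ^ 2 := by positivity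
    refine Nat.le_of_mul_le_mul_left ?_ hpos
    calc (m + 1) ^ 2 * (Nat.centralBinom (m + 1) ^ 2 * (3 * (m + 1) + 1))
        = ((m + 1) * Nat.centralBinom (m + 1)) ^ 2 * (3 * m + 4) := by ring
      _ = (2 * (2 * m + 1) * Nat.centralBinom m) ^ 2 * (3 * m + 4) := by rw [key]
      _ = (4 * (2 * m + 1) ^ 2 * (3 * m + 4)) * Nat.centralBinom m ^ 2 := by ring
      _ ≤ (16 * (m + 1) ^ 2 * (3 * m + 1)) * Nat.centralBinom m ^ 2 := by
          apply Nat.mul_le_mul_right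
          nlinarith
      _ = 16 * (m + 1) ^ 2 * (Nat.centralBinom m ^ 2 * (3 * m + 1)) := by ring
      _ ≤ 16 * (m + 1) ^ 2 * 16 ^ m := by
          exact Nat.mul_le_mul_left _ ih
      _ = (m + 1) ^ 2 * 16 ^ (m + 1) := by ring

lemma natLemma (n : ℕ) (hn : 0 < n) :
    (2 * (n - 1).choose (n / 2)) ^ 2 * (3 * (n / 2) + 1) ≤ 4 ^ n := by
  rcases Nat.even_or_odd n with ⟨m, hm⟩ | ⟨m, hm⟩
  · -- n = 2m, m ≥ 1; write m = k+1
    have hm1 : 1 ≤ m := by omega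
    obtain ⟨k, rfl⟩ := Nat.exists_eq_add_of_le hm1
    have hn' : n = 2 * (k + 1) := by omega
    subst hn'
    have h1 : (2 * (k + 1) - 1).choose (2 * (k + 1) / 2) = (2 * k + 1).choose (k + 1) := by
      congr 1 <;> omega
    have h2 : Nat.centralBinom (k + 1) = 2 * (2 * k + 1).choose (k + 1) := by
      have : Nat.centralBinom (k + 1) = (2 * k + 1).choose k + (2 * k + 1).choose (k + 1) := by
        rw [Nat.centralBinom]
        have : 2 * (k + 1) = (2 * k + 1) + 1 := by ring
        rw [this, Nat.choose_succ_succ' (2 * k + 1) k]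
      rw [this, ← Nat.choose_symm_half]; ring
    rw [h1]
    have := centA (k + 1)
    rw [h2] at this
    calc (2 * (2 * k + 1).choose (k + 1)) ^ 2 * (3 * (2 * (k + 1) / 2) + 1)
        = (2 * (2 * k + 1).choose (k + 1)) ^ 2 * (3 * (k + 1) + 1) := by
          congr 2; omega
      _ ≤ 16 ^ (k + 1) := this
      _ = 4 ^ (2 * (k + 1)) := by rw [pow_mul]; norm_num
  · -- n = 2m + 1
    subst hm
    have h1 : (2 * m + 1 - 1).choose ((2 * m + 1) / 2) = Nat.centralBinom m := by
      rw [Nat.centralBinom]; congr 1 <;> omega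
    rw [h1]
    have h2 : (2 * m + 1) / 2 = m := by omega
    rw [h2]
    have := centA m
    calc (2 * Nat.centralBinom m) ^ 2 * (3 * m + 1)
        = 4 * (Nat.centralBinom m ^ 2 * (3 * m + 1)) := by ring
      _ ≤ 4 * 16 ^ m := by omega
      _ = 4 ^ (2 * m + 1) := by rw [pow_succ, pow_mul]; norm_num; ring
  
/-- For every positive integer `n`,
`2^(-n)·C(n-1, ⌊n/2⌋) ≤ √(3·e^(1/12)/(4πn)) ≤ 1/√n`. -/
theorem stmt10 (n : ℕ) (hn : 0 < n) :
    ((n - 1).choose (n / 2) : ℝ) / 2 ^ n ≤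
        Real.sqrt (3 * Real.exp (1 / 12) / (4 * Real.pi * n)) ∧
      Real.sqrt (3 * Real.exp (1 / 12) / (4 * Real.pi * n)) ≤ 1 / Real.sqrt n := by
  have hnR : (0 : ℝ) < n := by exact_mod_cast hn
  have hpi := Real.pi_pos
  have hexp : (0 : ℝ) < Real.exp (1 / 12) := Real.exp_pos _
  constructor
  · rw [Real.le_sqrt (by positivity) (by positivity)]
    have key := natLemma n hn
    have keyR : (2 * (n - 1).choose (n / 2) : ℝ) ^ 2 * (3 * (n / 2 : ℕ) + 1) ≤ 4 ^ n := by
      exact_mod_cast key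
    set C : ℝ := ((n - 1).choose (n / 2) : ℝ) with hC
    have hCnn : 0 ≤ C := by positivity
    set M : ℝ := (3 * (n / 2 : ℕ) + 1 : ℝ) with hM
    have hMpos : (0 : ℝ) < M := by positivity
    -- π * n ≤ 3 * exp(1/12) * M
    have hpi_le : Real.pi ≤ 3 * Real.exp (1 / 12) := by
      have h1 : (1 : ℝ) / 12 + 1 ≤ Real.exp (1 / 12) := Real.add_one_le_exp _
      have h2 : Real.pi < 3.15 := Real.pi_lt_d2
      nlinarith
    have hnM : (n : ℝ) ≤ M := by
      rw [hM]
      have : n ≤ 3 * (n / 2) + 1 := by omega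
      exact_mod_cast this
    have hstep : Real.pi * n ≤ 3 * Real.exp (1 / 12) * M := by
      calc Real.pi * n ≤ (3 * Real.exp (1 / 12)) * n := by
            apply mul_le_mul_of_nonneg_right hpi_le (le_of_lt hnR)
        _ ≤ 3 * Real.exp (1 / 12) * M := by
            apply mul_le_mul_of_nonneg_left hnM (by positivity)
    -- from keyR : 4 * C^2 * M ≤ 4^n
    have hkey2 : 4 * C ^ 2 * M ≤ 4 ^ n := by
      calc 4 * C ^ 2 * M = (2 * C) ^ 2 * M := by ring
        _ ≤ 4 ^ n := keyR
    have h4n : ((4 : ℝ) ^ n) = (2 ^ n) ^ 2 := by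
      rw [← pow_mul, mul_comm, pow_mul]; norm_num
    rw [div_pow, ← h4n, div_le_div_iff₀ (by positivity) (by positivity)]
    -- goal : C^2 * (4 * π * n) ≤ 3 * exp(1/12) * 4^n
    calc C ^ 2 * (4 * Real.pi * n) = 4 * C ^ 2 * (Real.pi * n) := by ring
      _ ≤ 4 * C ^ 2 * (3 * Real.exp (1 / 12) * M) := by
          apply mul_le_mul_of_nonneg_left hstep (by positivity)
      _ = 3 * Real.exp (1 / 12) * (4 * C ^ 2 * M) := by ring
      _ ≤ 3 * Real.exp (1 / 12) * 4 ^ n := by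
          apply mul_le_mul_of_nonneg_left hkey2 (by positivity)
  · have h1 : (1 : ℝ) / Real.sqrt n = Real.sqrt (1 / n) := by
      rw [one_div, one_div, Real.sqrt_inv]
    rw [h1]
    apply Real.sqrt_le_sqrt
    rw [div_le_div_iff₀ (by positivity) hnR]
    -- 3 * exp(1/12) * n ≤ 1 * (4 * π * n)
    have hexp1 : Real.exp (1 / 12) ≤ Real.exp 1 := by
      apply Real.exp_le_exp.mpr; norm_num
    have he : Real.exp 1 < 2.7182818286 := Real.exp_one_lt_d9
    have hpi3 : (3.141592 : ℝ) < Real.pi := Real.pi_gt_d6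
    nlinarith
end

section
/- Fix α ≥ 1 and define f_α : (0,1) → ℝ by f_α(x) = Σ_{l=0}^∞ 1{l < (1-x)/(2x)} · [ ((2l+2)/(1+x))^α − ((2l)/(1-x))^α ]. Then 0 < f_α(x) ≤ x^(-α) for all x ∈ (0,1). -/
/-- For `α ≥ 1`, the function
`f_α(x) = Σ_{l=0}^∞ 1{l < (1-x)/(2x)}·[((2l+2)/(1+x))^α − ((2l)/(1-x))^α]`
satisfies `0 < f_α(x) ≤ x^(-α)` for all `x ∈ (0,1)` (real powers). -/
theorem stmt11 (α : ℝ) (hα : 1 ≤ α) (f : ℝ → ℝ)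
    (hf : ∀ x : ℝ, f x = ∑' l : ℕ,
      if (l : ℝ) < (1 - x) / (2 * x)
      then ((2 * (l : ℝ) + 2) / (1 + x)) ^ α - ((2 * (l : ℝ)) / (1 - x)) ^ α
      else 0) :
    ∀ x : ℝ, 0 < x → x < 1 → 0 < f x ∧ f x ≤ x ^ (-α) := by
  intro x hx0 hx1
  have h1p : (0:ℝ) < 1 + x := by linarith
  have h1m : (0:ℝ) < 1 - x := by linarith
  have hα0 : (0:ℝ) ≤ α := by linarith
  set c : ℝ := (1 - x) / (2 * x) with hc
  have hc0 : 0 < c := by positivity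
  set N : ℕ := ⌈c⌉₊ with hN
  -- the tsum is a finite sum
  have hsum : f x = ∑ l ∈ Finset.range N,
      (((2 * (l:ℝ) + 2) / (1 + x)) ^ α - ((2 * (l:ℝ)) / (1 - x)) ^ α) := by
    rw [hf]
    rw [tsum_eq_sum (s := Finset.range N)
      (by
        intro l hl
        rw [if_neg]
        intro h
        exact hl (Finset.mem_range.mpr (Nat.lt_ceil.mpr h)))]
    refine Finset.sum_congr rfl fun l hl => ?_
    rw [if_pos (Nat.lt_ceil.mp (Finset.mem_range.mp hl))]
  -- key strict inequality for l < c
  have hkey : ∀ l : ℕ, (l:ℝ) < c →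
      (2 * (l:ℝ)) / (1 - x) < (2 * (l:ℝ) + 2) / (1 + x) := by
    intro l hl
    have h2 : (l:ℝ) * (2 * x) < 1 - x := (lt_div_iff₀ (by positivity)).mp hl
    rw [div_lt_div_iff₀ h1m h1p]
    nlinarith
  -- each summand is nonnegative
  have hterm_nonneg : ∀ l ∈ Finset.range N,
      0 ≤ ((2 * (l:ℝ) + 2) / (1 + x)) ^ α - ((2 * (l:ℝ)) / (1 - x)) ^ α := by
    intro l hl
    have hl' : (l:ℝ) < c := Nat.lt_ceil.mp (Finset.mem_range.mp hl)
    have := hkey l hl'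
    have h1 : (0:ℝ) ≤ 2 * (l:ℝ) / (1 - x) := by positivity
    linarith [Real.rpow_le_rpow h1 this.le hα0]
  constructor
  · -- positivity
    rw [hsum]
    apply Finset.sum_pos' hterm_nonneg
    refine ⟨0, Finset.mem_range.mpr (Nat.ceil_pos.mpr hc0), ?_⟩
    have h0 : ((2 * ((0:ℕ):ℝ)) / (1 - x)) ^ α = 0 := by
      norm_num
      exact Real.zero_rpow (by linarith)
    rw [h0]
    have : (0:ℝ) < ((2 * ((0:ℕ):ℝ) + 2) / (1 + x)) ^ α :=
      Real.rpow_pos_of_pos (by positivity) α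
    linarith
  · -- upper bound
    rw [hsum]
    have hstep : ∀ l ∈ Finset.range N,
        ((2 * (l:ℝ) + 2) / (1 + x)) ^ α - ((2 * (l:ℝ)) / (1 - x)) ^ α ≤
        ((2 * ((l+1:ℕ):ℝ)) / (1 + x)) ^ α - ((2 * (l:ℝ)) / (1 + x)) ^ α := by
      intro l _
      have hnum : (0:ℝ) ≤ 2 * (l:ℝ) := by positivity
      have hdd : (2 * (l:ℝ)) / (1 + x) ≤ (2 * (l:ℝ)) / (1 - x) :=
        div_le_div_of_nonneg_left hnum h1m (by linarith)
      have h1 : (0:ℝ) ≤ 2 * (l:ℝ) / (1 + x) := by positivity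
      have := Real.rpow_le_rpow h1 hdd hα0
      have hcast : (2 * ((l+1:ℕ):ℝ)) = 2 * (l:ℝ) + 2 := by push_cast; ring
      rw [hcast]
      linarith
    calc ∑ l ∈ Finset.range N,
          (((2 * (l:ℝ) + 2) / (1 + x)) ^ α - ((2 * (l:ℝ)) / (1 - x)) ^ α)
        ≤ ∑ l ∈ Finset.range N,
          (((2 * ((l+1:ℕ):ℝ)) / (1 + x)) ^ α - ((2 * (l:ℝ)) / (1 + x)) ^ α) :=
          Finset.sum_le_sum hstep
      _ = ((2 * (N:ℝ)) / (1 + x)) ^ α - ((2 * ((0:ℕ):ℝ)) / (1 + x)) ^ α :=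
          Finset.sum_range_sub (fun l => ((2 * (l:ℝ)) / (1 + x)) ^ α) N
      _ ≤ x ^ (-α) := by
          have h0 : ((2 * ((0:ℕ):ℝ)) / (1 + x)) ^ α = 0 := by
            norm_num
            exact Real.zero_rpow (by linarith)
          rw [h0, sub_zero]
          have hNle : (N:ℝ) < c + 1 := Nat.ceil_lt_add_one hc0.le
          have hcx : c * (2 * x) = 1 - x := div_mul_cancel₀ _ (by positivity)
          have hbound : (2 * (N:ℝ)) / (1 + x) ≤ x⁻¹ := by
            rw [div_le_iff₀ h1p, ← one_div, div_mul_eq_mul_div, le_div_iff₀ hx0]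
            nlinarith
          have : x ^ (-α) = (x⁻¹) ^ α := by
            rw [Real.rpow_neg hx0.le, ← Real.inv_rpow hx0.le]
          rw [this]
          exact Real.rpow_le_rpow (by positivity) hbound hα0
end

section
/- Fix α ≥ 1 and let f_α(x) = Σ_{l=0}^∞ 1{l < (1-x)/(2x)} · [((2l+2)/(1+x))^α − ((2l)/(1-x))^α] for x ∈ (0,1). Then lim_{x→0+} (α+1)·x^α·f_α(x) = 1. -/
/-!
With `N = ⌈(1 - x) / (2x)⌉₊` the series is the finite sum over `l < N`. Since
`Σ_{l<N} (l + 1)^α = Σ_{l<N} l^α + N^α`, it telescopes to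
`x^α f(x) = (2xN / (1 + x))^α - ((1 - x)^(-α) - (1 + x)^(-α)) (2x)^α Σ_{l<N} l^α`.
Here `2xN → 1`, the bracket is `2αx + o(x)`, and `Σ_{l<N} l^α ~ N^(α+1) / (α + 1)` by comparison
with `∫₀^N y^α dy`; so `(α + 1) x^α f(x) → (α + 1) - 2α · ½ = 1`.
-/

open Real Filter Set Topology Finset

lemma tsum_ite_natCast_lt (g : ℕ → ℝ) (t : ℝ) :
    ∑' l : ℕ, (if (l : ℝ) < t then g l else 0) = ∑ l ∈ range ⌈t⌉₊, g l := by
  rw [tsum_eq_sum (s := range ⌈t⌉₊) fun l hl ↦ if_neg (mt Nat.lt_ceil.mpr (by simpa using hl))]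
  exact sum_congr rfl fun l hl ↦ if_pos (Nat.lt_ceil.mp (mem_range.mp hl))

lemma sum_range_succ_rpow {α : ℝ} (hα : α ≠ 0) (N : ℕ) :
    ∑ l ∈ range N, ((l : ℝ) + 1) ^ α = ∑ l ∈ range N, (l : ℝ) ^ α + (N : ℝ) ^ α := by
  have h := sum_range_succ' (fun l : ℕ ↦ (l : ℝ) ^ α) N
  rw [sum_range_succ] at h
  simp only [Nat.cast_add, Nat.cast_one, Nat.cast_zero, zero_rpow hα, add_zero] at h
  exact h.symm

lemma sum_range_rpow_le {α : ℝ} (hα : 0 ≤ α) (n : ℕ) :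
    ∑ l ∈ range n, (l : ℝ) ^ α ≤ (n : ℝ) ^ (α + 1) / (α + 1) := by
  have hmono : MonotoneOn (fun y : ℝ ↦ y ^ α) (Icc 0 (0 + n)) :=
    (monotoneOn_rpow_Ici_of_exponent_nonneg hα).mono Icc_subset_Ici_self
  simpa [integral_rpow (Or.inl (by linarith : -1 < α)), zero_rpow (by linarith : α + 1 ≠ 0)]
    using hmono.sum_le_integral

lemma le_sum_range_rpow_add {α : ℝ} (hα : 0 < α) (n : ℕ) :
    (n : ℝ) ^ (α + 1) / (α + 1) ≤ ∑ l ∈ range n, (l : ℝ) ^ α + (n : ℝ) ^ α := by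
  have hmono : MonotoneOn (fun y : ℝ ↦ y ^ α) (Icc 0 (0 + n)) :=
    (monotoneOn_rpow_Ici_of_exponent_nonneg hα.le).mono Icc_subset_Ici_self
  have h := hmono.integral_le_sum
  simp only [integral_rpow (Or.inl (by linarith : -1 < α)), zero_add, Nat.cast_add,
    Nat.cast_one, zero_rpow (by linarith : α + 1 ≠ 0), sub_zero] at h
  linarith [sum_range_succ_rpow hα.ne' n]

lemma tendsto_sum_range_rpow_div {α : ℝ} (hα : 0 < α) :
    Tendsto (fun n : ℕ ↦ (α + 1) * (∑ l ∈ range n, (l : ℝ) ^ α) / (n : ℝ) ^ (α + 1))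
      atTop (𝓝 1) := by
  have hα1 : 0 < α + 1 := by linarith
  have hlow : Tendsto (fun n : ℕ ↦ 1 - (α + 1) / (n : ℝ)) atTop (𝓝 1) := by
    simpa using (tendsto_const_div_atTop_nhds_zero_nat (α + 1)).const_sub 1
  refine tendsto_of_tendsto_of_tendsto_of_le_of_le' hlow tendsto_const_nhds ?_ ?_
  all_goals
    filter_upwards [eventually_gt_atTop 0] with n hn
    have hn' : (0 : ℝ) < n := Nat.cast_pos.mpr hn
    have hpow : (n : ℝ) ^ (α + 1) = (n : ℝ) ^ α * n := rpow_add_one hn'.ne' α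
    have hpos : 0 < (n : ℝ) ^ α := rpow_pos_of_pos hn' α
  · have h := le_sum_range_rpow_add hα n
    rw [hpow, div_le_iff₀ hα1] at h
    rw [le_div_iff₀ (by positivity), hpow]
    field_simp
    nlinarith
  · have h := sum_range_rpow_le hα.le n
    rw [le_div_iff₀ hα1] at h
    rw [div_le_iff₀ (by positivity)]
    linarith

lemma mul_natCeil_div_mem_Ico {s t : ℝ} (hs : 0 ≤ s) (ht : 0 < t) :
    t * ⌈s / t⌉₊ ∈ Ico s (s + t) := by
  constructor
  · rw [← div_le_iff₀' ht]
    exact Nat.le_ceil _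
  · rw [← lt_div_iff₀' ht, add_div, div_self ht.ne']
    exact Nat.ceil_lt_add_one (div_nonneg hs ht.le)

lemma tendsto_two_mul_mul_natCeil :
    Tendsto (fun x : ℝ ↦ 2 * x * ⌈(1 - x) / (2 * x)⌉₊) (𝓝[>] 0) (𝓝 1) := by
  have hx : Tendsto (fun x : ℝ ↦ x) (𝓝[>] 0) (𝓝 0) := nhdsWithin_le_nhds
  have hlow : Tendsto (fun x : ℝ ↦ 1 - x) (𝓝[>] 0) (𝓝 1) := by simpa using hx.const_sub 1
  have hup : Tendsto (fun x : ℝ ↦ 1 - x + 2 * x) (𝓝[>] 0) (𝓝 1) := by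
    simpa using hlow.add (hx.const_mul 2)
  refine tendsto_of_tendsto_of_tendsto_of_le_of_le' hlow hup ?_ ?_
  all_goals
    filter_upwards [Ioo_mem_nhdsGT (zero_lt_one' ℝ)] with x ⟨hx0, hx1⟩
    have h := mul_natCeil_div_mem_Ico (s := 1 - x) (t := 2 * x) (by linarith) (by linarith)
  exacts [h.1, h.2.le]

lemma tendsto_natCeil_div_atTop :
    Tendsto (fun x : ℝ ↦ ⌈(1 - x) / (2 * x)⌉₊) (𝓝[>] 0) atTop := by
  refine tendsto_nat_ceil_atTop.comp ?_
  have h : Tendsto (fun x : ℝ ↦ (1 - x) / 2) (𝓝[>] 0) (𝓝 (1 / 2)) := by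
    have : Tendsto (fun x : ℝ ↦ x) (𝓝[>] 0) (𝓝 0) := nhdsWithin_le_nhds
    simpa using (this.const_sub 1).div_const 2
  refine (h.pos_mul_atTop (by norm_num) tendsto_inv_nhdsGT_zero).congr fun x ↦ ?_
  ring

lemma tendsto_one_sub_rpow_sub_one_add_rpow_div (α : ℝ) :
    Tendsto (fun x : ℝ ↦ ((1 - x) ^ (-α) - (1 + x) ^ (-α)) / x) (𝓝[>] 0) (𝓝 (2 * α)) := by
  have hsub : HasDerivAt (fun x : ℝ ↦ (1 - x) ^ (-α)) α 0 := by
    simpa using ((hasDerivAt_id (0 : ℝ)).const_sub 1).rpow_const (p := -α) (by simp)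
  have hadd : HasDerivAt (fun x : ℝ ↦ (1 + x) ^ (-α)) (-α) 0 := by
    simpa using ((hasDerivAt_id (0 : ℝ)).const_add 1).rpow_const (p := -α) (by simp)
  convert (hsub.sub hadd).tendsto_slope_zero_right using 2 with x
  · simp [div_eq_inv_mul]
  · ring

-- The right side is split into factors that each have a limit when `N = ⌈(1 - x) / (2x)⌉₊`.
lemma mul_rpow_mul_sum_range_eq {α x : ℝ} (hα : 0 < α) (hx0 : 0 < x) (hx1 : x < 1)
    {N : ℕ} (hN : 0 < N) :
    (α + 1) * x ^ α * ∑ l ∈ range N,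
        (((2 * (l : ℝ) + 2) / (1 + x)) ^ α - ((2 * (l : ℝ)) / (1 - x)) ^ α) =
      (α + 1) * (2 * x * N / (1 + x)) ^ α -
        ((1 - x) ^ (-α) - (1 + x) ^ (-α)) / x * (2 * x * N) ^ α * (x * N) *
          ((α + 1) * (∑ l ∈ range N, (l : ℝ) ^ α) / (N : ℝ) ^ (α + 1)) := by
  have hN' : (0 : ℝ) < N := Nat.cast_pos.mpr hN
  have hsum : ∑ l ∈ range N,
        (((2 * (l : ℝ) + 2) / (1 + x)) ^ α - ((2 * (l : ℝ)) / (1 - x)) ^ α) =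
      (2 / (1 + x)) ^ α * (∑ l ∈ range N, (l : ℝ) ^ α + (N : ℝ) ^ α) -
        (2 / (1 - x)) ^ α * ∑ l ∈ range N, (l : ℝ) ^ α := by
    rw [← sum_range_succ_rpow hα.ne', mul_sum, mul_sum, ← sum_sub_distrib]
    refine sum_congr rfl fun l _ ↦ ?_
    rw [← mul_rpow (by positivity) (by positivity), ← mul_rpow (by positivity) (by positivity)]
    congr 2 <;> ring
  rw [hsum, rpow_neg (by linarith), rpow_neg (by linarith), rpow_add_one hN'.ne',
    div_rpow (by positivity) (by linarith), div_rpow (by positivity) (by linarith),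
    div_rpow (by positivity) (by linarith), mul_rpow (by positivity) hN'.le,
    mul_rpow (by positivity) hx0.le]
  have : 0 < (1 - x) ^ α := rpow_pos_of_pos (by linarith) α
  have : 0 < (1 + x) ^ α := rpow_pos_of_pos (by linarith) α
  have : 0 < (N : ℝ) ^ α := rpow_pos_of_pos hN' α
  field_simp
  ring

/-- For `α ≥ 1`, with
`f_α(x) = Σ_{l=0}^∞ 1{l < (1-x)/(2x)}·[((2l+2)/(1+x))^α − ((2l)/(1-x))^α]`,
one has `lim_{x→0+} (α+1)·x^α·f_α(x) = 1`. -/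
theorem stmt12 (α : ℝ) (hα : 1 ≤ α) (f : ℝ → ℝ)
    (hf : ∀ x : ℝ, f x = ∑' l : ℕ,
      if (l : ℝ) < (1 - x) / (2 * x)
      then ((2 * (l : ℝ) + 2) / (1 + x)) ^ α - ((2 * (l : ℝ)) / (1 - x)) ^ α
      else 0) :
    Filter.Tendsto (fun x : ℝ ↦ (α + 1) * x ^ α * f x)
      (nhdsWithin 0 (Set.Ioi 0)) (nhds 1) := by
  have hα0 : 0 < α := by linarith
  set N : ℝ → ℕ := fun x ↦ ⌈(1 - x) / (2 * x)⌉₊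
  have hc : Tendsto (fun x : ℝ ↦ 2 * x * N x) (𝓝[>] 0) (𝓝 1) := tendsto_two_mul_mul_natCeil
  have hid : Tendsto (fun x : ℝ ↦ x) (𝓝[>] 0) (𝓝 0) := nhdsWithin_le_nhds
  have hmain : Tendsto (fun x : ℝ ↦ (2 * x * N x / (1 + x)) ^ α) (𝓝[>] 0) (𝓝 1) := by
    simpa using (hc.div (hid.const_add 1) (by norm_num)).rpow_const (p := α) (by norm_num)
  have hpow : Tendsto (fun x : ℝ ↦ (2 * x * N x) ^ α) (𝓝[>] 0) (𝓝 1) := by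
    simpa using hc.rpow_const (p := α) (by norm_num)
  have hxN : Tendsto (fun x : ℝ ↦ x * N x) (𝓝[>] 0) (𝓝 (1 / 2)) :=
    (hc.div_const 2).congr fun x ↦ by ring
  have hlim := (hmain.const_mul (α + 1)).sub
    ((((tendsto_one_sub_rpow_sub_one_add_rpow_div α).mul hpow).mul hxN).mul
      ((tendsto_sum_range_rpow_div hα0).comp tendsto_natCeil_div_atTop))
  refine (hlim.congr' ?_).trans_eq (congrArg 𝓝 (by ring))
  filter_upwards [Ioo_mem_nhdsGT (zero_lt_one' ℝ)] with x ⟨hx0, hx1⟩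
  have hN : 0 < N x := Nat.ceil_pos.mpr (div_pos (by linarith) (by linarith))
  rw [hf, tsum_ite_natCast_lt, mul_rpow_mul_sum_range_eq hα0 hx0 hx1 hN]
  rfl
end

section
/- Fix α ≥ 1, μ > 0, and q > α. Define F(y) = (1/√(2πμ)) ∫_{(y,1)} f_α(y/ξ) ξ^(-α) (1-ξ)^(-1/2) dξ where f_α(x) = Σ_{l=0}^∞ 1{l < (1-x)/(2x)}·[((2l+2)/(1+x))^α − ((2l)/(1-x))^α]. Then 2·∫_{(0,1]} q·x^(q-1)·F(x) dx = √(2/μ) · (Γ(q-α+1)/Γ(q-α+3/2)) · ∫_{(0,1)} q·x^(q-1)·f_α(x) dx, and in particular this quantity is finite. -/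
/-!
After Tonelli on the triangle `0 < x < ξ < 1` and the substitution `x = ξ u`, the moment
`∫ q x^(q-1) F(x) dx` factors as `(2πμ)^(-1/2)` times the moment `∫ q u^(q-1) f_α(u) du` times
the Beta integral `∫ ξ^(q-α) (1-ξ)^(-1/2) dξ = Γ(q-α+1) √π / Γ(q-α+3/2)`. As `f_α ≥ 0`, all of this
can be done with `ℝ≥0∞`-valued integrals; finiteness comes from `f_α(x) ≤ x^(-α)` and `q > α`.
-/

open MeasureTheory Set
open scoped ENNReal

namespace KernelMoment

lemma integrableOn_and_setIntegral_eq_of_eqOn_toReal {X : Type*} [MeasurableSpace X]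
    {μ : Measure X} {s : Set X} {φ : X → ℝ} {K : X → ℝ≥0∞} {c : ℝ} (hs : MeasurableSet s)
    (hK : AEMeasurable K (μ.restrict s)) (hfin : ∫⁻ x in s, K x ∂μ ≠ ⊤)
    (hφ : ∀ x ∈ s, φ x = c * (K x).toReal) :
    IntegrableOn φ s μ ∧ ∫ x in s, φ x ∂μ = c * (∫⁻ x in s, K x ∂μ).toReal := by
  have hae : φ =ᵐ[μ.restrict s] fun x ↦ c * (K x).toReal := ae_restrict_of_forall_mem hs hφ
  refine ⟨((integrable_toReal_of_lintegral_ne_top hK hfin).const_mul c).congr hae.symm, ?_⟩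
  rw [integral_congr_ae hae, integral_const_mul, integral_toReal hK (ae_lt_top' hK hfin)]

lemma setLIntegral_Ioo_comp_div (g : ℝ → ℝ≥0∞) {ξ : ℝ} (hξ : 0 < ξ) :
    ∫⁻ x in Ioo 0 ξ, g (x / ξ) = ENNReal.ofReal ξ * ∫⁻ u in Ioo 0 1, g u := by
  have himage : (ξ * ·) '' Ioo (0 : ℝ) 1 = Ioo 0 ξ := by
    rw [image_mul_left_Ioo hξ, mul_zero, mul_one]
  rw [← himage, lintegral_image_eq_lintegral_abs_deriv_mul measurableSet_Ioo
    (fun _ _ ↦ (hasDerivAt_const_mul ξ).hasDerivWithinAt) (mul_right_injective₀ hξ.ne').injOn,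
    lintegral_const_mul' _ _ ENNReal.ofReal_ne_top, abs_of_pos hξ]
  simp_rw [mul_div_cancel_left₀ _ hξ.ne']

lemma measurable_setLIntegral_Ioo {F : ℝ × ℝ → ℝ≥0∞} (hF : Measurable F) (b : ℝ) :
    Measurable fun x ↦ ∫⁻ ξ in Ioo x b, F (x, ξ) := by
  simp_rw [← lintegral_indicator measurableSet_Ioo]
  exact (hF.indicator ((measurableSet_lt measurable_fst measurable_snd).inter
    (measurableSet_lt measurable_snd measurable_const))).lintegral_prod_right'

lemma lintegral_Ioo_setLIntegral_Ioo_div {g h : ℝ → ℝ≥0∞} (hg : Measurable g)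
    (hh : Measurable h) :
    ∫⁻ x in Ioo 0 1, ∫⁻ ξ in Ioo x 1, g (x / ξ) * h ξ
      = (∫⁻ ξ in Ioo 0 1, ENNReal.ofReal ξ * h ξ) * ∫⁻ u in Ioo 0 1, g u := by
  set K : ℝ → ℝ → ℝ≥0∞ := fun x ξ ↦ (Ioi x).indicator (fun ξ ↦ g (x / ξ) * h ξ) ξ
  have hK : Measurable (Function.uncurry K) :=
    (by fun_prop : Measurable fun p : ℝ × ℝ ↦ g (p.1 / p.2) * h p.2).indicator
      (measurableSet_lt measurable_fst measurable_snd)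
  have hleft : ∀ x ∈ Ioo (0 : ℝ) 1,
      ∫⁻ ξ in Ioo x 1, g (x / ξ) * h ξ = ∫⁻ ξ in Ioo 0 1, K x ξ := by
    intro x hx
    rw [lintegral_indicator measurableSet_Ioi, Measure.restrict_restrict measurableSet_Ioi,
      Ioi_inter_Ioo, max_eq_left hx.1.le]
  have hright : ∀ ξ ∈ Ioo (0 : ℝ) 1,
      ∫⁻ x in Ioo 0 1, K x ξ = ENNReal.ofReal ξ * h ξ * ∫⁻ u in Ioo 0 1, g u := by
    intro ξ hξ
    have hKξ : ∀ x ∈ Ioo (0 : ℝ) 1, K x ξ = (Iio ξ).indicator (fun x ↦ h ξ * g (x / ξ)) x :=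
      fun x _ ↦ by simp only [K, indicator, mem_Ioi, mem_Iio, mul_comm]
    rw [setLIntegral_congr_fun measurableSet_Ioo hKξ, lintegral_indicator measurableSet_Iio,
      Measure.restrict_restrict measurableSet_Iio, Iio_inter_Ioo, min_eq_left hξ.2.le,
      lintegral_const_mul _ (by fun_prop), setLIntegral_Ioo_comp_div g hξ.1]
    ring
  rw [setLIntegral_congr_fun measurableSet_Ioo hleft,
    lintegral_lintegral_swap hK.aemeasurable, setLIntegral_congr_fun measurableSet_Ioo hright,
    lintegral_mul_const _ (by fun_prop)]

lemma setLIntegral_Ioo_rpow_mul_one_sub_rpow {a b : ℝ} (ha : 0 < a) (hb : 0 < b) :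
    ∫⁻ x in Ioo 0 1, ENNReal.ofReal (x ^ (a - 1) * (1 - x) ^ (b - 1))
      = ENNReal.ofReal (ProbabilityTheory.beta a b) := by
  have hB := ProbabilityTheory.beta_pos ha hb
  have h := ProbabilityTheory.lintegral_betaPDF_eq_one ha hb
  simp_rw [ProbabilityTheory.lintegral_betaPDF, mul_assoc,
    ENNReal.ofReal_mul (one_div_nonneg.2 hB.le)] at h
  rw [lintegral_const_mul' _ _ ENNReal.ofReal_ne_top] at h
  calc _ = ENNReal.ofReal (ProbabilityTheory.beta a b) * (ENNReal.ofReal (1 / _) *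
        ∫⁻ x in Ioo 0 1, ENNReal.ofReal (x ^ (a - 1) * (1 - x) ^ (b - 1))) := by
        rw [← mul_assoc, ← ENNReal.ofReal_mul hB.le, mul_one_div_cancel hB.ne',
          ENNReal.ofReal_one, one_mul]
    _ = _ := by rw [h, mul_one]

lemma beta_add_one_half (s : ℝ) : ProbabilityTheory.beta (s + 1) (1 / 2)
    = Real.Gamma (s + 1) * √Real.pi / Real.Gamma (s + 3 / 2) := by
  rw [ProbabilityTheory.beta, Real.Gamma_one_half_eq]
  ring_nf

lemma sqrt_two_div_eq {μ : ℝ} (hμ : 0 < μ) :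
    √(2 / μ) = 2 * √Real.pi / √(2 * Real.pi * μ) := by
  rw [eq_div_iff (by positivity), ← Real.sqrt_mul (by positivity),
    show 2 / μ * (2 * Real.pi * μ) = 2 ^ 2 * Real.pi by field_simp, Real.sqrt_mul (by positivity),
    Real.sqrt_sq zero_le_two]

section FAlpha

noncomputable def fAlphaTerm (α x : ℝ) (l : ℕ) : ℝ :=
  if (l : ℝ) < (1 - x) / (2 * x)
  then ((2 * (l : ℝ) + 2) / (1 + x)) ^ α - ((2 * (l : ℝ)) / (1 - x)) ^ α
  else 0

noncomputable def fAlpha (α x : ℝ) : ℝ := ∑' l : ℕ, fAlphaTerm α x l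

lemma pos_and_lt_of_natCast_lt_div {x : ℝ} {l : ℕ} (h : (l : ℝ) < (1 - x) / (2 * x)) :
    0 < x ∧ l * (2 * x) < 1 - x := by
  have hx : 0 < x := by
    by_contra! hx
    have : (1 - x) / (2 * x) ≤ 0 := div_nonpos_of_nonneg_of_nonpos (by linarith) (by linarith)
    linarith [l.cast_nonneg (α := ℝ)]
  exact ⟨hx, (lt_div_iff₀ (by positivity)).1 h⟩

variable {α : ℝ}

lemma fAlphaTerm_nonneg (hα : 0 ≤ α) (x : ℝ) (l : ℕ) : 0 ≤ fAlphaTerm α x l := by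
  unfold fAlphaTerm
  split_ifs with h
  · obtain ⟨hx, hlx⟩ := pos_and_lt_of_natCast_lt_div h
    have hbase : 2 * (l : ℝ) / (1 - x) ≤ (2 * l + 2) / (1 + x) := by
      rw [div_le_div_iff₀ (by nlinarith [l.cast_nonneg (α := ℝ)]) (by linarith)]
      nlinarith
    have := Real.rpow_le_rpow (div_nonneg (by positivity) (by nlinarith [l.cast_nonneg (α := ℝ)]))
      hbase hα
    linarith
  · exact le_rfl

lemma hasSum_fAlphaTerm (α x : ℝ) :
    HasSum (fAlphaTerm α x) (∑ l ∈ Finset.range ⌈(1 - x) / (2 * x)⌉₊, fAlphaTerm α x l) :=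
  hasSum_sum_of_ne_finset_zero fun _ hl ↦
    if_neg fun h ↦ hl (Finset.mem_range.2 (Nat.lt_ceil.2 h))

lemma fAlpha_nonneg (hα : 0 ≤ α) (x : ℝ) : 0 ≤ fAlpha α x :=
  tsum_nonneg (fAlphaTerm_nonneg hα x)

/-- Each term is at most an increment of `l ↦ (2l/(1+x))^α`, so the sum telescopes. -/
lemma fAlpha_le_rpow_neg (hα : 0 ≤ α) {x : ℝ} (hx : 0 < x) : fAlpha α x ≤ x ^ (-α) := by
  set N := ⌈(1 - x) / (2 * x)⌉₊
  set g : ℕ → ℝ := fun l ↦ (2 * (l : ℝ) / (1 + x)) ^ α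
  have hterm : ∀ l ∈ Finset.range N, fAlphaTerm α x l ≤ g (l + 1) - g l := by
    intro l hl
    have h := Nat.lt_ceil.1 (Finset.mem_range.1 hl)
    obtain ⟨-, hlx⟩ := pos_and_lt_of_natCast_lt_div h
    have h1x : 0 < 1 - x := by nlinarith [l.cast_nonneg (α := ℝ)]
    have hbase : 2 * (l : ℝ) / (1 + x) ≤ 2 * l / (1 - x) :=
      div_le_div_of_nonneg_left (by positivity) h1x (by linarith)
    have := Real.rpow_le_rpow (by positivity) hbase hα
    simp only [fAlphaTerm, if_pos h, g]
    rw [Nat.cast_succ, mul_add_one]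
    linarith
  have hN : 2 * (N : ℝ) / (1 + x) ≤ x⁻¹ := by
    rcases le_or_gt ((1 - x) / (2 * x)) 0 with ha | ha
    · simp [N, Nat.ceil_eq_zero.2 ha, hx.le]
    have hNx : (N : ℝ) * (2 * x) < 1 + x := by
      have := (lt_div_iff₀ (by positivity)).1 (sub_lt_iff_lt_add.2 (Nat.ceil_lt_add_one ha.le))
      linarith
    rw [div_le_iff₀ (by positivity), ← div_eq_inv_mul, le_div_iff₀ hx]
    linarith
  calc fAlpha α x = ∑ l ∈ Finset.range N, fAlphaTerm α x l := (hasSum_fAlphaTerm α x).tsum_eq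
    _ ≤ ∑ l ∈ Finset.range N, (g (l + 1) - g l) := Finset.sum_le_sum hterm
    _ = g N - g 0 := Finset.sum_range_sub g N
    _ ≤ (x⁻¹) ^ α := by
      have : 0 ≤ g 0 := Real.rpow_nonneg (by simp) α
      linarith [Real.rpow_le_rpow (by positivity) hN hα]
    _ = x ^ (-α) := by rw [Real.inv_rpow hx.le, Real.rpow_neg hx.le]

@[fun_prop]
lemma measurable_fAlpha (α : ℝ) : Measurable (fAlpha α) := by
  refine measurable_of_tendsto_metrizable (f := fun n x ↦ ∑ l ∈ Finset.range n, fAlphaTerm α x l)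
    (fun n ↦ Finset.measurable_sum _ fun l _ ↦ ?_)
    (tendsto_pi_nhds.2 fun x ↦ (hasSum_fAlphaTerm α x).summable.hasSum.tendsto_sum_nat)
  unfold fAlphaTerm
  exact Measurable.ite (measurableSet_lt measurable_const (by fun_prop)) (by fun_prop)
    measurable_const

lemma rpow_mul_fAlpha_nonneg {q x : ℝ} (hα : 0 ≤ α) (hq : 0 ≤ q) (hx : 0 ≤ x) :
    0 ≤ q * x ^ (q - 1) * fAlpha α x := by
  have := fAlpha_nonneg hα x
  positivity

lemma integrableOn_mul_fAlpha {q : ℝ} (hα : 0 ≤ α) (hαq : α < q) :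
    IntegrableOn (fun x ↦ q * x ^ (q - 1) * fAlpha α x) (Ioo 0 1) := by
  have hbound : IntegrableOn (fun x : ℝ ↦ q * x ^ (q - 1 - α)) (Ioo 0 1) :=
    ((intervalIntegrable_iff_integrableOn_Ioo_of_le zero_le_one).1
      (intervalIntegral.intervalIntegrable_rpow' (by linarith))).const_mul q
  refine hbound.mono' (by fun_prop : Measurable _).aestronglyMeasurable
    (ae_restrict_of_forall_mem measurableSet_Ioo fun x hx ↦ ?_)
  have hx0 : 0 < x := hx.1
  have hq : 0 < q := by linarith
  rw [Real.norm_of_nonneg (rpow_mul_fAlpha_nonneg hα hq.le hx0.le), sub_eq_add_neg (q - 1),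
    Real.rpow_add hx0, ← mul_assoc]
  exact mul_le_mul_of_nonneg_left (fAlpha_le_rpow_neg hα hx0) (by positivity)

end FAlpha

section Kernel

variable {α q : ℝ} {f : ℝ → ℝ}

noncomputable def kernelLIntegral (α : ℝ) (f : ℝ → ℝ) (x : ℝ) : ℝ≥0∞ :=
  ∫⁻ ξ in Ioo x 1, ENNReal.ofReal (f (x / ξ) * ξ ^ (-α) * (1 - ξ) ^ (-(1 : ℝ) / 2))

lemma measurable_kernelLIntegral (hfm : Measurable f) : Measurable (kernelLIntegral α f) :=
  measurable_setLIntegral_Ioo (F := fun p ↦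
    ENNReal.ofReal (f (p.1 / p.2) * p.2 ^ (-α) * (1 - p.2) ^ (-(1 : ℝ) / 2))) (by fun_prop) 1

lemma setLIntegral_Ioo_rpow_mul_kernelLIntegral (hf0 : ∀ x, 0 ≤ f x) (hfm : Measurable f)
    (hq : 0 ≤ q) (hαq : α < q + 1) :
    ∫⁻ x in Ioo 0 1, ENNReal.ofReal (q * x ^ (q - 1)) * kernelLIntegral α f x
      = ENNReal.ofReal (ProbabilityTheory.beta (q - α + 1) (1 / 2)) *
          ∫⁻ u in Ioo 0 1, ENNReal.ofReal (q * u ^ (q - 1) * f u) := by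
  set g : ℝ → ℝ≥0∞ := fun u ↦ ENNReal.ofReal (q * u ^ (q - 1) * f u)
  set h : ℝ → ℝ≥0∞ := fun ξ ↦ ENNReal.ofReal (ξ ^ (q - α - 1) * (1 - ξ) ^ (-(1 : ℝ) / 2))
  have hsplit : ∀ x ∈ Ioo (0 : ℝ) 1, ENNReal.ofReal (q * x ^ (q - 1)) * kernelLIntegral α f x
      = ∫⁻ ξ in Ioo x 1, g (x / ξ) * h ξ := by
    intro x hx
    rw [kernelLIntegral, ← lintegral_const_mul' _ _ ENNReal.ofReal_ne_top]
    refine setLIntegral_congr_fun measurableSet_Ioo fun ξ hξ ↦ ?_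
    have hx0 : 0 < x := hx.1
    have hξ0 : 0 < ξ := hx0.trans hξ.1
    have hfξ := hf0 (x / ξ)
    rw [← ENNReal.ofReal_mul (by positivity), ← ENNReal.ofReal_mul (by positivity)]
    congr 1
    rw [Real.div_rpow hx0.le hξ0.le, show q - α - 1 = (q - 1) + -α by ring, Real.rpow_add hξ0]
    field_simp
  have hbeta : ∫⁻ ξ in Ioo 0 1, ENNReal.ofReal ξ * h ξ
      = ENNReal.ofReal (ProbabilityTheory.beta (q - α + 1) (1 / 2)) := by
    rw [← setLIntegral_Ioo_rpow_mul_one_sub_rpow (by linarith) one_half_pos]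
    refine setLIntegral_congr_fun measurableSet_Ioo fun ξ hξ ↦ ?_
    rw [← ENNReal.ofReal_mul hξ.1.le, ← mul_assoc, mul_comm ξ, ← Real.rpow_add_one hξ.1.ne']
    ring_nf
  rw [setLIntegral_congr_fun measurableSet_Ioo hsplit,
    lintegral_Ioo_setLIntegral_Ioo_div (by fun_prop) (by fun_prop), hbeta]

lemma setIntegral_eq_toReal_kernelLIntegral (hf0 : ∀ x, 0 ≤ f x) (hfm : Measurable f)
    {x : ℝ} (hx : 0 ≤ x) :
    ∫ ξ in Ioo x 1, f (x / ξ) * ξ ^ (-α) * (1 - ξ) ^ (-(1 : ℝ) / 2)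
      = (kernelLIntegral α f x).toReal := by
  refine integral_eq_lintegral_of_nonneg_ae (ae_restrict_of_forall_mem measurableSet_Ioo
    fun ξ hξ ↦ ?_) (by fun_prop)
  have := hf0 (x / ξ)
  have : 0 ≤ 1 - ξ := by linarith [hξ.2]
  have : 0 ≤ ξ := by linarith [hξ.1]
  positivity

end Kernel

end KernelMoment

open KernelMoment in
/-- For `α ≥ 1`, `μ > 0`, `q > α`:
`2∫_{(0,1]} q·x^(q-1)·F(x) dx = √(2/μ)·(Γ(q-α+1)/Γ(q-α+3/2))·∫_{(0,1)} q·x^(q-1)·f_α(x) dx`,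
and in particular the left-hand integrand is integrable. -/
theorem stmt15 (α μ q : ℝ) (hα : 1 ≤ α) (hμ : 0 < μ) (hq : α < q)
    (f : ℝ → ℝ)
    (hf : ∀ x : ℝ, f x = ∑' l : ℕ,
      if (l : ℝ) < (1 - x) / (2 * x)
      then ((2 * (l : ℝ) + 2) / (1 + x)) ^ α - ((2 * (l : ℝ)) / (1 - x)) ^ α
      else 0)
    (F : ℝ → ℝ)
    (hF : ∀ y : ℝ, F y = (1 / Real.sqrt (2 * Real.pi * μ)) *
      ∫ ξ in Set.Ioo y 1, f (y / ξ) * ξ ^ (-α) * (1 - ξ) ^ (-(1 : ℝ) / 2)) :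
    IntegrableOn (fun x : ℝ ↦ q * x ^ (q - 1) * F x) (Set.Ioc 0 1) ∧
    2 * ∫ x in Set.Ioc (0 : ℝ) 1, q * x ^ (q - 1) * F x =
      Real.sqrt (2 / μ) * (Real.Gamma (q - α + 1) / Real.Gamma (q - α + 3 / 2)) *
        ∫ x in Set.Ioo (0 : ℝ) 1, q * x ^ (q - 1) * f x := by
  obtain rfl : f = fAlpha α := funext hf
  have hα0 : 0 ≤ α := by linarith
  have hq0 : 0 < q := by linarith
  have hf0 := fAlpha_nonneg hα0
  have hint0 : ∀ x ∈ Ioo (0 : ℝ) 1, 0 ≤ q * x ^ (q - 1) * fAlpha α x :=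
    fun x hx ↦ rpow_mul_fAlpha_nonneg hα0 hq0.le hx.1.le
  have hK : ∫⁻ x in Ioo 0 1, ENNReal.ofReal (q * x ^ (q - 1)) * kernelLIntegral α (fAlpha α) x
      = ENNReal.ofReal (ProbabilityTheory.beta (q - α + 1) (1 / 2)) *
          ENNReal.ofReal (∫ x in Ioo 0 1, q * x ^ (q - 1) * fAlpha α x) := by
    rw [setLIntegral_Ioo_rpow_mul_kernelLIntegral hf0 (measurable_fAlpha α) hq0.le (by linarith),
      ofReal_integral_eq_lintegral_ofReal (integrableOn_mul_fAlpha hα0 hq)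
        (ae_restrict_of_forall_mem measurableSet_Ioo hint0)]
  have hFK : ∀ x ∈ Ioo (0 : ℝ) 1, q * x ^ (q - 1) * F x = 1 / √(2 * Real.pi * μ) *
      (ENNReal.ofReal (q * x ^ (q - 1)) * kernelLIntegral α (fAlpha α) x).toReal := fun x hx ↦ by
    have := hx.1
    rw [hF, setIntegral_eq_toReal_kernelLIntegral hf0 (measurable_fAlpha α) hx.1.le,
      ENNReal.toReal_mul, ENNReal.toReal_ofReal (by positivity)]
    ring
  have hKm : Measurable fun x ↦ ENNReal.ofReal (q * x ^ (q - 1)) * kernelLIntegral α (fAlpha α) x :=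
    (by fun_prop : Measurable fun x : ℝ ↦ ENNReal.ofReal (q * x ^ (q - 1))).mul
      (measurable_kernelLIntegral (measurable_fAlpha α))
  obtain ⟨hint, hval⟩ := integrableOn_and_setIntegral_eq_of_eqOn_toReal measurableSet_Ioo
    hKm.aemeasurable (by rw [hK]; finiteness) hFK
  rw [integrableOn_Ioc_iff_integrableOn_Ioo, integral_Ioc_eq_integral_Ioo, hval, hK,
    ENNReal.toReal_mul,
    ENNReal.toReal_ofReal (ProbabilityTheory.beta_pos (by linarith) one_half_pos).le,
    ENNReal.toReal_ofReal (setIntegral_nonneg measurableSet_Ioo hint0), beta_add_one_half,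
    sqrt_two_div_eq hμ]
  exact ⟨hint, by ring⟩
end
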